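/- arXiv:0707.3704 — 12 statements merged into one kernel-verified Lean document; each statement's English description precedes it below -/
import Mathlib

section
/- Let C be a category with a congruence ∼ on morphisms, and let S be the class of morphisms f : X → Y for which there exists g : Y → X with fg ∼ 1_Y and gf ∼ 1_X. If S and ∼ are compatible (i.e. f ∼ g implies δ(f) = δ(g) where δ : C → C[S⁻¹] is the localisation functor), then the quotient category C/∼ is canonically isomorphic to the localisation C[S⁻¹]. -/
open CategoryTheory

universe v u

/-- The class of morphisms which are equivalences with respect to a congruence `r`:
`f : X ⟶ Y` such that there exists `g : Y ⟶ X` with `f ≫ g ∼ 𝟙 X` and `g ≫ f ∼ 𝟙 Y`. -/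
def hoEquivs {C : Type u} [Category.{v} C] (r : HomRel C) : MorphismProperty C :=
  fun X Y f => ∃ g : Y ⟶ X, r (f ≫ g) (𝟙 X) ∧ r (g ≫ f) (𝟙 Y)

/-- If the congruence `r` and its associated class of equivalences `S = hoEquivs r` are
compatible (i.e. `r f g` implies that `f` and `g` become equal in the localisation `C[S⁻¹]`),
then the quotient category `C/∼` is canonically isomorphic to the localisation `C[S⁻¹]`:
the quotient functor `π : C ⥤ C/∼` is a localisation functor with respect to `S`. -/
theorem quotient_iso_localization_of_compatible
    {C : Type u} [Category.{v} C] (r : HomRel C) [Congruence r]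
    (compat : ∀ ⦃X Y : C⦄ (f g : X ⟶ Y), r f g →
      (hoEquivs r).Q.map f = (hoEquivs r).Q.map g) :
    (Quotient.functor r).IsLocalization (hoEquivs r) := by
  have hinv : (hoEquivs r).IsInvertedBy (Quotient.functor r) := by
    rintro X Y f ⟨g, h₁, h₂⟩
    refine ⟨(Quotient.functor r).map g, ?_, ?_⟩
    · rw [← (Quotient.functor r).map_comp, ← (Quotient.functor r).map_id]
      exact CategoryTheory.Quotient.sound r h₁
    · rw [← (Quotient.functor r).map_comp, ← (Quotient.functor r).map_id]
      exact CategoryTheory.Quotient.sound r h₂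
  let F : (hoEquivs r).Localization ⥤ CategoryTheory.Quotient r :=
    Localization.Construction.lift (Quotient.functor r) hinv
  let G : CategoryTheory.Quotient r ⥤ (hoEquivs r).Localization :=
    CategoryTheory.Quotient.lift r (hoEquivs r).Q (fun _ _ f g h => compat f g h)
  have hF : (hoEquivs r).Q ⋙ F = Quotient.functor r :=
    Localization.Construction.fac _ _
  have hG : Quotient.functor r ⋙ G = (hoEquivs r).Q :=
    CategoryTheory.Quotient.lift_spec r _ _
  have h₁ : F ⋙ G = 𝟭 _ := by
    apply Localization.Construction.uniq
    rw [← Functor.assoc, hF, hG, Functor.comp_id]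
  have h₂ : G ⋙ F = 𝟭 _ := by
    apply CategoryTheory.Quotient.lift_unique'
    rw [← Functor.assoc, hG, hF, Functor.comp_id]
  exact Functor.IsLocalization.of_equivalence_target (hoEquivs r).Q (hoEquivs r)
    (Quotient.functor r)
    (CategoryTheory.Equivalence.mk F G (eqToIso h₁.symm) (eqToIso h₂)) (eqToIso hF)
end

section
/- Let (C, S, W) be a category with strong and weak equivalences and M an object of C. Then M is cofibrant if and only if for every object X of C, the map γ'_X : C[S⁻¹](M, X) → C[W⁻¹](M, X) induced by the canonical functor γ' : C[S⁻¹] → C[W⁻¹] is bijective. -/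
open CategoryTheory

universe v u

variable {C : Type u} [Category.{v} C]

/-- `(C, S, W)` is a category with strong and weak equivalences. -/
structure StrongWeak (S W : MorphismProperty C) : Prop where
  comp_S : ∀ ⦃X Y Z : C⦄ (f : X ⟶ Y) (g : Y ⟶ Z), S f → S g → S (f ≫ g)
  comp_W : ∀ ⦃X Y Z : C⦄ (f : X ⟶ Y) (g : Y ⟶ Z), W f → W g → W (f ≫ g)
  iso_S : ∀ ⦃X Y : C⦄ (f : X ⟶ Y), IsIso f → S f
  iso_W : ∀ ⦃X Y : C⦄ (f : X ⟶ Y), IsIso f → W f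
  le_sat : ∀ ⦃X Y : C⦄ (f : X ⟶ Y), S f → IsIso (W.Q.map f)

/-- An object `M` is `(S, W)`-cofibrant. -/
def Cofibrant (S W : MorphismProperty C) (M : C) : Prop :=
  ∀ ⦃Y X : C⦄ (w : Y ⟶ X), W w →
    Function.Bijective (fun g : S.Q.obj M ⟶ S.Q.obj Y => g ≫ S.Q.map w)

/-- Since `S` is contained in the saturation of `W`, the localisation functor
`γ : C ⥤ C[W⁻¹]` factors through `δ : C ⥤ C[S⁻¹]` via `γ' : C[S⁻¹] ⥤ C[W⁻¹]`. -/
noncomputable def gammaPrime (S W : MorphismProperty C)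
    (h : ∀ ⦃X Y : C⦄ (f : X ⟶ Y), S f → IsIso (W.Q.map f)) :
    S.Localization ⥤ W.Localization :=
  Localization.Construction.lift W.Q (fun _ _ f hf => h f hf)

/-!
If `M` is cofibrant, the functor `Hom_{C[S⁻¹]}(δM, δ -)` inverts `W`, so it lifts to a
functor `G` on `C[W⁻¹]`, and `G ∘ γ' = Hom_{C[S⁻¹]}(δM, -)` by the universal property of
`C[S⁻¹]`. Evaluation at `𝟙_{δM}`, `φ ↦ G φ 𝟙`, is then inverse to `γ'` on morphisms out of
`δM`: one composite is the identity because `G ∘ γ' = Hom(δM, -)`, the other by naturality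
of `γ' : G ⟶ Hom_{C[W⁻¹]}(γM, -)`. Conversely, if `γ'` is bijective on these Hom-sets,
then postcomposition with `δw` is conjugate to postcomposition with the isomorphism `γw`.
-/

open Opposite Localization.Construction

section

variable {S W : MorphismProperty C} (h : ∀ ⦃X Y : C⦄ (f : X ⟶ Y), S f → IsIso (W.Q.map f))

lemma Q_comp_gammaPrime : S.Q ⋙ gammaPrime S W h = W.Q :=
  fac _ _

lemma gammaPrime_map_Q {X Y : C} (f : X ⟶ Y) : (gammaPrime S W h).map (S.Q.map f) = W.Q.map f :=
  eq_of_heq (Functor.hcongr_hom (Q_comp_gammaPrime h) f)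

lemma cofibrant_iff_isInvertedBy_coyoneda (M : C) :
    Cofibrant S W M ↔ W.IsInvertedBy (S.Q ⋙ coyoneda.obj (op (S.Q.obj M))) :=
  forall₃_congr fun _ _ w => imp_congr_right fun _ =>
    (isIso_iff_bijective ((S.Q ⋙ coyoneda.obj (op (S.Q.obj M))).map w)).symm

variable {M : C} (hM : Cofibrant S W M)

namespace Cofibrant

noncomputable def liftCoyoneda : W.Localization ⥤ Type (max u v) :=
  lift _ ((cofibrant_iff_isInvertedBy_coyoneda M).1 hM)

lemma Q_comp_liftCoyoneda : W.Q ⋙ hM.liftCoyoneda = S.Q ⋙ coyoneda.obj (op (S.Q.obj M)) :=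
  fac _ _

lemma liftCoyoneda_map_Q {X Y : C} (f : X ⟶ Y) (g : S.Q.obj M ⟶ S.Q.obj X) :
    hM.liftCoyoneda.map (W.Q.map f) g = g ≫ S.Q.map f :=
  types_congr_hom (eq_of_heq (Functor.hcongr_hom hM.Q_comp_liftCoyoneda f)) g

lemma gammaPrime_comp_liftCoyoneda :
    gammaPrime S W h ⋙ hM.liftCoyoneda = coyoneda.obj (op (S.Q.obj M)) :=
  uniq _ _ (by rw [← Functor.assoc, Q_comp_gammaPrime, Q_comp_liftCoyoneda])

lemma liftCoyoneda_map_gammaPrime_map {X : S.Localization} (g : S.Q.obj M ⟶ X) :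
    hM.liftCoyoneda.map ((gammaPrime S W h).map g) (𝟙 _) = g :=
  (types_congr_hom
    (eq_of_heq (Functor.hcongr_hom (hM.gammaPrime_comp_liftCoyoneda h) g)) (𝟙 _)).trans
    (Category.id_comp g)

noncomputable def toCoyoneda : hM.liftCoyoneda ⟶ coyoneda.obj (op (W.Q.obj M)) :=
  natTransExtension
    { app := fun _ => TypeCat.ofHom fun g => (gammaPrime S W h).map g
      naturality := fun X Y f => by
        ext g
        exact (congrArg _ (hM.liftCoyoneda_map_Q f g)).trans
          (((gammaPrime S W h).map_comp _ _).trans (congrArg _ (gammaPrime_map_Q h f))) }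

lemma gammaPrime_map_liftCoyoneda_map {X : C} (φ : W.Q.obj M ⟶ W.Q.obj X) :
    (gammaPrime S W h).map (hM.liftCoyoneda.map φ (𝟙 (S.Q.obj M))) = φ := by
  refine (NatTrans.naturality_apply (hM.toCoyoneda h) φ
    (𝟙 (S.Q.obj M) : S.Q.obj M ⟶ S.Q.obj M)).trans ?_
  change (gammaPrime S W h).map (𝟙 (S.Q.obj M)) ≫ φ = φ
  rw [CategoryTheory.Functor.map_id]
  exact Category.id_comp φ

lemma bijective_gammaPrime_map (hM : Cofibrant S W M) (X : C) :
    Function.Bijective fun g : S.Q.obj M ⟶ S.Q.obj X => (gammaPrime S W h).map g :=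
  Function.bijective_iff_has_inverse.2 ⟨fun φ => hM.liftCoyoneda.map φ (𝟙 (S.Q.obj M)),
    hM.liftCoyoneda_map_gammaPrime_map h, hM.gammaPrime_map_liftCoyoneda_map h⟩

end Cofibrant

lemma cofibrant_of_bijective_gammaPrime_map
    (hM : ∀ X : C,
      Function.Bijective fun g : S.Q.obj M ⟶ S.Q.obj X => (gammaPrime S W h).map g) :
    Cofibrant S W M := by
  intro Y X w hw
  have : IsIso (W.Q.map w) := W.Q_inverts w hw
  have square :
      (fun g : S.Q.obj M ⟶ S.Q.obj X => (gammaPrime S W h).map g) ∘ (· ≫ S.Q.map w) =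
        (asIso (W.Q.map w)).homToEquiv ∘ fun g => (gammaPrime S W h).map g := by
    funext g
    exact ((gammaPrime S W h).map_comp g (S.Q.map w)).trans (congrArg _ (gammaPrime_map_Q h w))
  rw [← (hM X).of_comp_iff', square]
  exact (Equiv.bijective _).comp (hM Y)

end

/-- `M` is cofibrant if and only if for every object `X`, the map
`C[S⁻¹](M, X) → C[W⁻¹](M, X)` induced by `γ'` is bijective. -/
theorem cofibrant_iff_gammaPrime_bijective (S W : MorphismProperty C)
    (hsw : StrongWeak S W) (M : C) :
    Cofibrant S W M ↔ ∀ X : C,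
      Function.Bijective (fun g : S.Q.obj M ⟶ S.Q.obj X =>
        (gammaPrime S W hsw.le_sat).map g) :=
  ⟨fun hM => hM.bijective_gammaPrime_map hsw.le_sat,
    cofibrant_of_bijective_gammaPrime_map hsw.le_sat⟩
end

section
/- Let (C, S, W) be a category with strong and weak equivalences and let M be a full subcategory of the category of cofibrant objects. Then the functor M[S⁻¹, C] → C[W⁻¹] induced by γ' is fully faithful. In particular it reflects isomorphisms: if a morphism w between objects of M in C[S⁻¹] becomes an isomorphism in C[W⁻¹], then w is already an isomorphism in C[S⁻¹]. -/
/-!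
For cofibrant `M`, the functor `C[S⁻¹](M, -)` inverts `W`, and it inverts `S` anyway. Since
`γ'` is a localization of `C[S⁻¹]` at the image of `W ⊔ S`, the corepresentable functor
`C[S⁻¹](M, -)` descends to a functor `F` on `C[W⁻¹]`, and a Yoneda argument with the element
of `F(M)` coming from `𝟙 M` shows that `γ'` is bijective on morphisms out of `M`.
-/

open CategoryTheory

universe v u

variable {C : Type u} [Category.{v} C]

open Opposite

universe w

namespace CategoryTheory

lemma Functor.IsLocalization.of_le {D E : Type*} [Category* D] [Category* E] (L : D ⥤ E)
    {W W' : MorphismProperty D} [L.IsLocalization W] (h : W ≤ W') (hW' : W'.IsInvertedBy L) :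
    L.IsLocalization W' :=
  of_equivalence_source L W L W' Equivalence.refl (h.trans W'.le_isoClosure) hW'
    (Functor.leftUnitor L)

lemma Functor.isIso_of_isIso_map {D E : Type*} [Category* D] [Category* E] (F : D ⥤ E)
    {X Y : D} (f : X ⟶ Y) [IsIso (F.map f)]
    (hYX : Function.Surjective (F.map : (Y ⟶ X) → _))
    (hX : Function.Injective (F.map : (X ⟶ X) → _))
    (hY : Function.Injective (F.map : (Y ⟶ Y) → _)) : IsIso f := by
  obtain ⟨g, hg⟩ := hYX (CategoryTheory.inv (F.map f))
  exact ⟨g, hX (by simp [hg]), hY (by simp [hg])⟩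

theorem Localization.bijective_map_of_isInvertedBy_coyoneda {D E : Type*} [Category.{w} D]
    [Category.{w} E] (L : D ⥤ E) (W : MorphismProperty D) [L.IsLocalization W] {d : D}
    (hd : W.IsInvertedBy (coyoneda.obj (op d))) (X : D) :
    Function.Bijective (L.map : (d ⟶ X) → (L.obj d ⟶ L.obj X)) := by
  let F := lift _ hd L
  let e : L ⋙ F ≅ coyoneda.obj (op d) := fac _ hd L
  let x₀ : F.obj (L.obj d) := e.inv.app d (𝟙 d)
  let mapL : coyoneda.obj (op d) ⟶ L ⋙ coyoneda.obj (op (L.obj d)) :=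
    { app _ := ↾fun g ↦ L.map g }
  let α : F ⟶ coyoneda.obj (op (L.obj d)) := liftNatTrans L W _ _ F _ (e.hom ≫ mapL)
  refine Function.bijective_iff_has_inverse.2 ⟨fun φ ↦ e.hom.app X (F.map φ x₀), ?_, ?_⟩
  · intro g
    have hx₀ : F.map (L.map g) x₀ = e.inv.app X g := by
      simpa using (types_congr_hom (e.inv.naturality g) (𝟙 d)).symm
    simp only [hx₀]
    exact types_congr_hom (e.inv_hom_id_app X) g
  · intro φ
    -- `α` sends `x₀` to `𝟙`, so naturality of `α` at `φ` is the claim.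
    simpa [α, mapL, x₀] using types_congr_hom (α.naturality φ) x₀

end CategoryTheory

lemma gammaPrime_isLocalization (S W : MorphismProperty C)
    (h : ∀ ⦃X Y : C⦄ (f : X ⟶ Y), S f → IsIso (W.Q.map f)) :
    (gammaPrime S W h).IsLocalization ((W ⊔ S).map S.Q) := by
  have hfac : S.Q ⋙ gammaPrime S W h = W.Q := Localization.Construction.fac _ _
  have : (S.Q ⋙ gammaPrime S W h).IsLocalization (W ⊔ S) := by
    rw [hfac]
    refine Functor.IsLocalization.of_le W.Q le_sup_left ?_
    rintro _ _ f (hf | hf)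
    · exact Localization.inverts W.Q W f hf
    · exact h f hf
  exact Functor.IsLocalization.of_comp S.Q _ S _ (W ⊔ S) le_sup_right rfl

lemma Cofibrant.isInvertedBy_coyoneda {S W : MorphismProperty C} {M : C}
    (hM : Cofibrant S W M) :
    ((W ⊔ S).map S.Q).IsInvertedBy (coyoneda.obj (op (S.Q.obj M))) := by
  rw [MorphismProperty.IsInvertedBy.map_iff]
  rintro _ _ f (hf | hf)
  · exact (isIso_iff_bijective _).2 (hM f hf)
  · have := Localization.inverts S.Q S f hf
    exact Functor.map_isIso (coyoneda.obj (op (S.Q.obj M))) (S.Q.map f)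

lemma Cofibrant.bijective_map_gammaPrime {S W : MorphismProperty C}
    (h : ∀ ⦃X Y : C⦄ (f : X ⟶ Y), S f → IsIso (W.Q.map f)) {M : C} (hM : Cofibrant S W M)
    (X : C) :
    Function.Bijective
      ((gammaPrime S W h).map : (S.Q.obj M ⟶ S.Q.obj X) → _) :=
  have := gammaPrime_isLocalization S W h
  Localization.bijective_map_of_isInvertedBy_coyoneda _ _ hM.isInvertedBy_coyoneda _

/-- For a full subcategory `M` of the cofibrant objects (given by a predicate `P` on objects
which implies cofibrancy), the functor `M[S⁻¹, C] ⥤ C[W⁻¹]` induced by `γ'` is fully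
faithful (hom-wise, `γ'` is bijective between objects of `M`); in particular it reflects
isomorphisms. -/
theorem relative_localization_fully_faithful (S W : MorphismProperty C)
    (hsw : StrongWeak S W) (P : C → Prop) (hP : ∀ M : C, P M → Cofibrant S W M) :
    (∀ (M N : C), P M → P N →
      Function.Bijective (fun g : S.Q.obj M ⟶ S.Q.obj N =>
        (gammaPrime S W hsw.le_sat).map g)) ∧
    (∀ (M N : C), P M → P N → ∀ w : S.Q.obj M ⟶ S.Q.obj N,
      IsIso ((gammaPrime S W hsw.le_sat).map w) → IsIso w) := by
  have hbij {M : C} (hM : P M) (X : C) := (hP M hM).bijective_map_gammaPrime hsw.le_sat X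
  refine ⟨fun M N hM _ ↦ hbij hM N, fun M N hM hN w _ ↦ ?_⟩
  exact (gammaPrime S W hsw.le_sat).isIso_of_isIso_map w (hbij hN M).2 (hbij hM M).1
    (hbij hN N).1
end

section
/- A category with strong and weak equivalences (C, S, W) is a left Cartan-Eilenberg category if and only if the functor j : C_cof[S⁻¹, C] → C[W⁻¹] (the restriction of γ' : C[S⁻¹] → C[W⁻¹] to the full subcategory of cofibrant objects) is an equivalence of categories. -/
open CategoryTheory

universe v u

variable {C : Type u} [Category.{v} C]

/-- `(C, S, W)` is a left Cartan-Eilenberg category: every object has a cofibrant left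
model, i.e. a cofibrant object `M` and a morphism `ε : M ⟶ X` in `C[S⁻¹]` which becomes
an isomorphism in `C[W⁻¹]`. -/
def LeftCE (S W : MorphismProperty C)
    (h : ∀ ⦃X Y : C⦄ (f : X ⟶ Y), S f → IsIso (W.Q.map f)) : Prop :=
  ∀ X : C, ∃ (M : C) (ε : S.Q.obj M ⟶ S.Q.obj X),
    Cofibrant S W M ∧ IsIso ((gammaPrime S W h).map ε)

/-- The relative localisation `C_cof[S⁻¹, C]`: the full subcategory of `C[S⁻¹]` whose
objects are the cofibrant objects of `C`. -/
@[nolint unusedArguments]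
noncomputable def relLocCof (S W : MorphismProperty C) :=
  InducedCategory S.Localization
    (fun M : {M : C // Cofibrant S W M} => S.Q.obj M.1)

noncomputable instance (S W : MorphismProperty C) : Category (relLocCof S W) :=
  InducedCategory.instCategory

/-- The functor `j : C_cof[S⁻¹, C] ⥤ C[W⁻¹]`. -/
noncomputable def jFunctor (S W : MorphismProperty C)
    (h : ∀ ⦃X Y : C⦄ (f : X ⟶ Y), S f → IsIso (W.Q.map f)) :
    relLocCof S W ⥤ W.Localization :=
  inducedFunctor _ ⋙ gammaPrime S W h

/-!
For a cofibrant `M`, the functor `C[S⁻¹](M, -)` restricted to `C` inverts `W`, so it descends to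
a functor `homFrom` on `C[W⁻¹]`. Extending natural transformations from `C` gives
`C[S⁻¹](M, -) ⟶ γ' ⋙ homFrom` with identity components and `homFrom ⟶ C[W⁻¹](M, -)` with
components `γ'`; their naturality says that `α ↦ α_*(𝟙 M)` is inverse to
`γ' : C[S⁻¹](M, Y) → C[W⁻¹](M, Y)`. Hence `j` is always fully faithful, and it is essentially
surjective exactly when every object has a cofibrant left model.
-/

open Opposite

namespace Cofibrant

variable {S W : MorphismProperty C} {M : C}

lemma isInvertedBy_homFrom (hM : Cofibrant S W M) :
    W.IsInvertedBy (S.Q ⋙ coyoneda.obj (op (S.Q.obj M))) :=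
  fun _ _ w hw => (isIso_iff_bijective _).2 (hM w hw)

noncomputable def homFrom (hM : Cofibrant S W M) : W.Localization ⥤ Type (max u v) :=
  Localization.Construction.lift _ hM.isInvertedBy_homFrom

variable (h : ∀ ⦃X Y : C⦄ (f : X ⟶ Y), S f → IsIso (W.Q.map f))

noncomputable def coyonedaToHomFrom (hM : Cofibrant S W M) :
    coyoneda.obj (op (S.Q.obj M)) ⟶ gammaPrime S W h ⋙ hM.homFrom :=
  Localization.Construction.natTransExtension (𝟙 (S.Q ⋙ coyoneda.obj (op (S.Q.obj M))))

noncomputable def homFromToCoyoneda (hM : Cofibrant S W M) :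
    hM.homFrom ⟶ coyoneda.obj (op (W.Q.obj M)) :=
  Localization.Construction.natTransExtension
    { app := fun Y => TypeCat.ofHom fun (x : S.Q.obj M ⟶ S.Q.obj Y) => (gammaPrime S W h).map x
      naturality := fun X Y f => by
        ext x
        exact (gammaPrime S W h).map_comp x (S.Q.map f) }

lemma homFrom_map_gammaPrime_map (hM : Cofibrant S W M) {X Y : C}
    (g : S.Q.obj X ⟶ S.Q.obj Y) (x : S.Q.obj M ⟶ S.Q.obj X) :
    hM.homFrom.map ((gammaPrime S W h).map g) x = x ≫ g :=
  (NatTrans.naturality_apply (hM.coyonedaToHomFrom h) g x).symm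

lemma gammaPrime_map_homFrom_map (hM : Cofibrant S W M) {X Y : C}
    (β : W.Q.obj X ⟶ W.Q.obj Y) (x : S.Q.obj M ⟶ S.Q.obj X) :
    (gammaPrime S W h).map (hM.homFrom.map β x) = (gammaPrime S W h).map x ≫ β :=
  NatTrans.naturality_apply (hM.homFromToCoyoneda h) β x

theorem gammaPrime_map_bijective (hM : Cofibrant S W M) (Y : C) :
    Function.Bijective
      ((gammaPrime S W h).map : (S.Q.obj M ⟶ S.Q.obj Y) → (W.Q.obj M ⟶ W.Q.obj Y)) := by
  refine Function.bijective_iff_has_inverse.2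
    ⟨fun α => hM.homFrom.map α (𝟙 (S.Q.obj M)), fun g => ?_, fun α => ?_⟩
  · exact (hM.homFrom_map_gammaPrime_map h g (𝟙 _)).trans (Category.id_comp g)
  · exact (hM.gammaPrime_map_homFrom_map h α (𝟙 _)).trans
      ((congrArg (· ≫ α) ((gammaPrime S W h).map_id _)).trans (Category.id_comp α))

end Cofibrant

section

variable {S W : MorphismProperty C} (h : ∀ ⦃X Y : C⦄ (f : X ⟶ Y), S f → IsIso (W.Q.map f))

lemma jFunctor_map_bijective (A B : relLocCof S W) :
    Function.Bijective ((jFunctor S W h).map : (A ⟶ B) → _) :=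
  (A.2.gammaPrime_map_bijective h B.1).comp InducedCategory.homEquiv.bijective

lemma nonempty_fullyFaithful_jFunctor : Nonempty (jFunctor S W h).FullyFaithful :=
  (Functor.FullyFaithful.nonempty_iff_map_bijective _).2 (jFunctor_map_bijective h)

lemma leftCE_iff_essSurj_jFunctor : LeftCE S W h ↔ (jFunctor S W h).EssSurj := by
  refine ⟨fun hCE => ⟨fun Z => ?_⟩, fun hj X => ?_⟩
  · obtain ⟨M, ε, hM, hε⟩ := hCE Z.as.obj
    exact ⟨⟨M, hM⟩, ⟨@asIso _ _ _ _ ((gammaPrime S W h).map ε) hε⟩⟩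
  · let A := (jFunctor S W h).objPreimage (W.Q.obj X)
    let e := (jFunctor S W h).objObjPreimageIso (W.Q.obj X)
    obtain ⟨ε, hε⟩ := (A.2.gammaPrime_map_bijective h X).2 e.hom
    exact ⟨A.1, ε, A.2, hε ▸ e.isIso_hom⟩

end

/-- `(C, S, W)` is a left Cartan-Eilenberg category if and only if
`j : C_cof[S⁻¹, C] ⥤ C[W⁻¹]` is an equivalence of categories. -/
theorem leftCE_iff_j_equivalence (S W : MorphismProperty C) (hsw : StrongWeak S W) :
    LeftCE S W hsw.le_sat ↔ (jFunctor S W hsw.le_sat).IsEquivalence := by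
  obtain ⟨hj⟩ := nonempty_fullyFaithful_jFunctor hsw.le_sat
  rw [leftCE_iff_essSurj_jFunctor]
  exact ⟨fun _ => ⟨hj.faithful, hj.full, inferInstance⟩, fun _ => inferInstance⟩
end

section
/- Let B be a category, R : B → B an endofunctor, and ε : R ⟹ 1_B a natural transformation such that both whiskered transformations εR and Rε : R² ⟹ R are natural isomorphisms. Then εR = Rε, so (R, ε) is a coidempotent functor. -/
open CategoryTheory

universe v u

/-- If `R : B ⥤ B` is an endofunctor with a natural transformation `ε : R ⟹ 𝟭 B` such
that both `εR` (with components `ε_{R X}`) and `Rε` (with components `R(ε_X)`) are natural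
isomorphisms, then `εR = Rε`, so `(R, ε)` is a coidempotent functor. -/
theorem coidempotent_of_iso {B : Type u} [Category.{v} B]
    (R : B ⥤ B) (ε : R ⟶ 𝟭 B)
    (h₁ : ∀ X : B, IsIso (ε.app (R.obj X)))
    (h₂ : ∀ X : B, IsIso (R.map (ε.app X))) :
    ∀ X : B, ε.app (R.obj X) = R.map (ε.app X) := by
  intro X
  -- naturality of ε at ε.app X
  have nat : ∀ {A C : B} (f : A ⟶ C),
      ε.app A ≫ f = R.map f ≫ ε.app C := fun f => (ε.naturality f).symm
  have key : R.map (ε.app (R.obj X)) = R.map (R.map (ε.app X)) := by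
    have h := nat (ε.app X)
    have h' := congrArg R.map h
    simp only [Functor.map_comp] at h'
    haveI := h₂ X
    exact (cancel_mono (R.map (ε.app X))).mp h'
  have s1 : ε.app (R.obj (R.obj X)) ≫ ε.app (R.obj X)
      = R.map (ε.app (R.obj X)) ≫ ε.app (R.obj X) := nat _
  have s2 : ε.app (R.obj (R.obj X)) ≫ R.map (ε.app X)
      = R.map (R.map (ε.app X)) ≫ ε.app (R.obj X) := nat _
  haveI := h₁ (R.obj X)
  have : ε.app (R.obj (R.obj X)) ≫ ε.app (R.obj X)
      = ε.app (R.obj (R.obj X)) ≫ R.map (ε.app X) := by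
    rw [s1, s2, key]
  exact (cancel_epi (ε.app (R.obj (R.obj X)))).mp this
end

section
/- Let (C, S, W) be a left Cartan-Eilenberg category. Then the inclusion functor i : C_cof[S⁻¹, C] → C[S⁻¹] admits a right adjoint r, with counit ε' : i∘r ⟹ 1, such that a morphism of C[S⁻¹] lies in the saturation of δ(W) if and only if r sends it to an isomorphism, and r∗ε' is an isomorphism. In particular C_cof[S⁻¹, C] is a coreflective subcategory of C[S⁻¹]. -/
/-!
For a cofibrant `M`, the functor `Hom_{C[S⁻¹]}(M, -)` inverts `W`, so it factors through
`γ' : C[S⁻¹] ⥤ C[W⁻¹]` and inverts every `γ'`-isomorphism. Applied to a cofibrant left model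
`ε : M ⟶ X`, this says that every map from a cofibrant object to `X` factors uniquely through `ε`,
i.e. the models are the components of the counit of a right adjoint `r` to the inclusion.
Applied to a map between cofibrant objects, it gives a Whitehead theorem: `γ'`-isomorphisms
between cofibrant objects are isomorphisms. Since `γ'(ε)` is invertible, the naturality square
of `ε` then shows that `r f` is invertible exactly when `γ' f` is.
-/

open CategoryTheory

universe v u

variable {C : Type u} [Category.{v} C]

namespace CategoryTheory.Adjunction

variable {A B D : Type*} [Category A] [Category B] [Category D]

section UniversalCounit

variable (i : A ⥤ B) (R : B → A) (ε : ∀ X, i.obj (R X) ⟶ X)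
  (hε : ∀ a X, Function.Bijective (fun g : a ⟶ R X => i.map g ≫ ε X))

noncomputable def homEquivOfUniversalCounit (a : A) (X : B) : (i.obj a ⟶ X) ≃ (a ⟶ R X) :=
  (Equiv.ofBijective _ (hε a X)).symm

lemma homEquivOfUniversalCounit_naturality (a' a : A) (X : B) (f : a' ⟶ a) (g : i.obj a ⟶ X) :
    homEquivOfUniversalCounit i R ε hε a' X (i.map f ≫ g) =
      f ≫ homEquivOfUniversalCounit i R ε hε a X g := by
  rw [homEquivOfUniversalCounit, Equiv.symm_apply_eq]
  change _ = i.map (f ≫ (Equiv.ofBijective _ (hε a X)).symm g) ≫ ε X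
  rw [i.map_comp, Category.assoc]
  exact congrArg (i.map f ≫ ·) ((Equiv.ofBijective _ (hε a X)).apply_symm_apply g).symm

noncomputable def ofUniversalCounit :
    i ⊣ rightAdjointOfEquiv (homEquivOfUniversalCounit i R ε hε)
      (homEquivOfUniversalCounit_naturality i R ε hε) :=
  adjunctionOfEquivRight _ _

lemma ofUniversalCounit_counit_app (X : B) :
    (ofUniversalCounit i R ε hε).counit.app X = ε X := by
  change (Equiv.ofBijective _ (hε (R X) X)).symm.symm (𝟙 _) = ε X
  rw [Equiv.symm_symm, Equiv.ofBijective_apply, i.map_id, Category.id_comp]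

end UniversalCounit

lemma isIso_map_iff_of_isIso_map_counit {i : A ⥤ B} {r : B ⥤ A} (adj : i ⊣ r) (G : B ⥤ D)
    [∀ X, IsIso (G.map (adj.counit.app X))] [(i ⋙ G).ReflectsIsomorphisms]
    {X Y : B} (f : X ⟶ Y) : IsIso (r.map f) ↔ IsIso (G.map f) := by
  have square : (i ⋙ G).map (r.map f) ≫ G.map (adj.counit.app Y) =
      G.map (adj.counit.app X) ≫ G.map f := by
    simpa only [Functor.comp_map, Functor.id_map, G.map_comp] using
      congrArg G.map (adj.counit.naturality f)
  calc IsIso (r.map f) ↔ IsIso ((i ⋙ G).map (r.map f)) := (isIso_iff_of_reflects_iso _ _).symm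
    _ ↔ IsIso ((i ⋙ G).map (r.map f) ≫ G.map (adj.counit.app Y)) :=
      (isIso_comp_right_iff _ _).symm
    _ ↔ IsIso (G.map (adj.counit.app X) ≫ G.map f) := by rw [square]
    _ ↔ IsIso (G.map f) := isIso_comp_left_iff _ _

end CategoryTheory.Adjunction

section CartanEilenberg

variable {S W : MorphismProperty C} (h : ∀ ⦃X Y : C⦄ (f : X ⟶ Y), S f → IsIso (W.Q.map f))

lemma Cofibrant.bijective_comp_of_isIso_gammaPrime {M : C} (hM : Cofibrant S W M)
    {X Y : S.Localization} (φ : X ⟶ Y) [IsIso ((gammaPrime S W h).map φ)] :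
    Function.Bijective (fun g : S.Q.obj M ⟶ X => g ≫ φ) := by
  let F := coyoneda.obj (Opposite.op (S.Q.obj M))
  have hF : W.IsInvertedBy (S.Q ⋙ F) := fun _ _ w hw => (isIso_iff_bijective _).2 (hM w hw)
  let G := Localization.Construction.lift (S.Q ⋙ F) hF
  have hγ : S.Q ⋙ gammaPrime S W h = W.Q := Localization.Construction.fac _ _
  have hG : gammaPrime S W h ⋙ G = F := by
    apply Localization.Construction.uniq
    rw [← Functor.assoc, hγ, Localization.Construction.fac]
  have : IsIso (F.map φ) := by
    rw [Functor.congr_hom hG.symm φ, Functor.comp_map]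
    infer_instance
  exact (isIso_iff_bijective (F.map φ)).1 this

lemma Cofibrant.isIso_of_isIso_gammaPrime {M N : C} (hM : Cofibrant S W M)
    (hN : Cofibrant S W N) (g : S.Q.obj M ⟶ S.Q.obj N) [IsIso ((gammaPrime S W h).map g)] :
    IsIso g := by
  obtain ⟨k, hk⟩ := (hN.bijective_comp_of_isIso_gammaPrime h g).2 (𝟙 _)
  have hkg : k ≫ g = 𝟙 _ := hk
  have hgk : g ≫ k = 𝟙 _ := (hM.bijective_comp_of_isIso_gammaPrime h g).1 <| by
    simp only [Category.assoc, hkg, Category.comp_id, Category.id_comp]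
  exact ⟨k, hgk, hkg⟩

variable (S W) in
noncomputable abbrev cofibrantInclusion : relLocCof S W ⥤ S.Localization :=
  inducedFunctor (fun M : {M : C // Cofibrant S W M} => S.Q.obj M.1)

instance : (cofibrantInclusion S W ⋙ gammaPrime S W h).ReflectsIsomorphisms where
  reflects {M N} f hf := by
    have : IsIso ((gammaPrime S W h).map ((cofibrantInclusion S W).map f)) := hf
    have : IsIso ((cofibrantInclusion S W).map f) :=
      Cofibrant.isIso_of_isIso_gammaPrime h M.2 N.2 _
    exact (fullyFaithfulInducedFunctor _).isIso_of_isIso_map f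

lemma cofibrantInclusion_map_comp_bijective {M : relLocCof S W} {X : S.Localization}
    (ε : (cofibrantInclusion S W).obj M ⟶ X) [IsIso ((gammaPrime S W h).map ε)]
    (N : relLocCof S W) :
    Function.Bijective (fun g : N ⟶ M => (cofibrantInclusion S W).map g ≫ ε) :=
  (N.2.bijective_comp_of_isIso_gammaPrime h ε).comp
    ((fullyFaithfulInducedFunctor _).map_bijective N M)

lemma LeftCE.exists_cofibrant_model (hce : LeftCE S W h) (X : S.Localization) :
    ∃ (M : relLocCof S W) (ε : (cofibrantInclusion S W).obj M ⟶ X),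
      IsIso ((gammaPrime S W h).map ε) := by
  obtain ⟨X, rfl⟩ := (Localization.Construction.objEquiv S).surjective X
  obtain ⟨M, ε, hM, hε⟩ := hce X
  exact ⟨⟨M, hM⟩, ε, hε⟩

end CartanEilenberg

/-- If `(C, S, W)` is a left Cartan-Eilenberg category, then the inclusion
`i : C_cof[S⁻¹, C] ⥤ C[S⁻¹]` admits a right adjoint `r` with counit `ε'` such that a
morphism of `C[S⁻¹]` lies in the saturation of `δ(W)` (equivalently, becomes an
isomorphism in `C[W⁻¹]`) if and only if `r` sends it to an isomorphism, and `r ∗ ε'` is an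
isomorphism.  In particular `C_cof[S⁻¹, C]` is a coreflective subcategory of `C[S⁻¹]`. -/
theorem coreflective_of_leftCE (S W : MorphismProperty C) (hsw : StrongWeak S W)
    (hce : LeftCE S W hsw.le_sat) :
    ∃ (r : S.Localization ⥤ relLocCof S W)
      (adj : (inducedFunctor (fun M : {M : C // Cofibrant S W M} => S.Q.obj M.1)) ⊣ r),
      (∀ ⦃X Y : S.Localization⦄ (f : X ⟶ Y),
        (IsIso ((gammaPrime S W hsw.le_sat).map f) ↔ IsIso (r.map f))) ∧
      (∀ X : S.Localization, IsIso (r.map (adj.counit.app X))) := by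
  choose R ε hε using hce.exists_cofibrant_model
  let adj := Adjunction.ofUniversalCounit (cofibrantInclusion S W) R ε
    fun N X => cofibrantInclusion_map_comp_bijective hsw.le_sat (ε X) N
  have hcounit (X : S.Localization) :
      IsIso ((gammaPrime S W hsw.le_sat).map (adj.counit.app X)) := by
    rw [Adjunction.ofUniversalCounit_counit_app]
    exact hε X
  exact ⟨_, adj, fun _ _ f => (adj.isIso_map_iff_of_isIso_map_counit _ f).symm,
    fun X => (adj.isIso_map_iff_of_isIso_map_counit _ _).2 (hcounit X)⟩
end

section
/- Let (C, S, W) be a category with strong and weak equivalences, M a full subcategory of C. Suppose (i) for every w : Y → X in W and every f ∈ C(M, X) with M an object of M, there exists g ∈ C[S⁻¹](M, Y) with w∘g = f in C[S⁻¹]; (ii) for every w : Y → X in W and M in M, the map w_* : C[S⁻¹](M, Y) → C[S⁻¹](M, X) is injective; (iii) for every object X of C there is a morphism ε : M → X in W with M in M. Then every object of M is cofibrant, (C, S, W) is a left Cartan-Eilenberg category, and M[S⁻¹, C] → C[W⁻¹] is an equivalence of categories. -/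
open CategoryTheory

universe v u

variable {C : Type u} [Category.{v} C]

/-!
By (iii) choose for every object `X` a weak equivalence `ε_X : R X ⟶ X` with `R X` in `M`.
By (i) and (ii) every `f : X ⟶ Y` has a unique lift `R f : R X ⟶ R Y` in `C[S⁻¹]` with
`R f ≫ ε_Y = ε_X ≫ f`. Uniqueness makes `R` a functor `C ⥤ C[S⁻¹]` which inverts `W`,
so it factors through `C[W⁻¹]` as `R̄`, and `ε` is natural both as `γ' ⋙ R̄ ⟶ 𝟭` and as
`R̄ ⋙ γ' ⟶ 𝟭`. For `M` in `M`, (i) gives a section `e` of `ε_M`, and the two naturalities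
say that `β = e ≫ R̄ (γ' β) ≫ ε_X` and `ψ = γ' (e ≫ R̄ ψ ≫ ε_X)`: `γ'` is bijective on
morphisms out of `M`. Cofibrancy follows by lifting `γ' φ ≫ (γ' w)⁻¹`.
-/

open Localization.Construction

structure LiftingSubcategory (S W : MorphismProperty C) (P : C → Prop) : Prop where
  exists_lift : ∀ ⦃Y X : C⦄ (w : Y ⟶ X), W w → ∀ (M : C), P M → ∀ f : M ⟶ X,
    ∃ g : S.Q.obj M ⟶ S.Q.obj Y, g ≫ S.Q.map w = S.Q.map f
  lift_unique : ∀ ⦃Y X : C⦄ (w : Y ⟶ X), W w → ∀ (M : C), P M →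
    Function.Injective (fun g : S.Q.obj M ⟶ S.Q.obj Y => g ≫ S.Q.map w)
  exists_model : ∀ X : C, ∃ (M : C) (ε : M ⟶ X), P M ∧ W ε

-- `(gammaPrime S W hsat).obj (S.Q.obj X)` is `W.Q.obj X` only after unfolding, which `rw` does
-- not do; equations through `gammaPrime` are therefore chained with `Eq.trans`.
theorem gammaPrime_map_Q_map {S W : MorphismProperty C}
    (hsat : ∀ ⦃X Y : C⦄ (f : X ⟶ Y), S f → IsIso (W.Q.map f)) {X Y : C} (f : X ⟶ Y) :
    (gammaPrime S W hsat).map (S.Q.map f) = W.Q.map f := rfl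

namespace LiftingSubcategory

variable {S W : MorphismProperty C} {P : C → Prop}

section

variable (hP : LiftingSubcategory S W P)

noncomputable def model (X : C) : C := (hP.exists_model X).choose

noncomputable def modelHom (X : C) : hP.model X ⟶ X :=
  (hP.exists_model X).choose_spec.choose

theorem prop_model (X : C) : P (hP.model X) :=
  (hP.exists_model X).choose_spec.choose_spec.1

theorem modelHom_mem (X : C) : W (hP.modelHom X) :=
  (hP.exists_model X).choose_spec.choose_spec.2

noncomputable def modelMap {X Y : C} (f : X ⟶ Y) :
    S.Q.obj (hP.model X) ⟶ S.Q.obj (hP.model Y) :=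
  (hP.exists_lift _ (hP.modelHom_mem Y) _ (hP.prop_model X) (hP.modelHom X ≫ f)).choose

theorem modelMap_comp_modelHom {X Y : C} (f : X ⟶ Y) :
    hP.modelMap f ≫ S.Q.map (hP.modelHom Y) = S.Q.map (hP.modelHom X ≫ f) :=
  (hP.exists_lift _ (hP.modelHom_mem Y) _ (hP.prop_model X) (hP.modelHom X ≫ f)).choose_spec

theorem modelMap_eq {X Y : C} (f : X ⟶ Y) {g : S.Q.obj (hP.model X) ⟶ S.Q.obj (hP.model Y)}
    (hg : g ≫ S.Q.map (hP.modelHom Y) = S.Q.map (hP.modelHom X ≫ f)) : hP.modelMap f = g :=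
  hP.lift_unique _ (hP.modelHom_mem Y) _ (hP.prop_model X)
    ((hP.modelMap_comp_modelHom f).trans hg.symm)

theorem exists_comp_modelHom_eq_id {M : C} (hM : P M) :
    ∃ e : S.Q.obj M ⟶ S.Q.obj (hP.model M), e ≫ S.Q.map (hP.modelHom M) = 𝟙 _ := by
  obtain ⟨e, he⟩ := hP.exists_lift _ (hP.modelHom_mem M) M hM (𝟙 M)
  exact ⟨e, he.trans (S.Q.map_id M)⟩

noncomputable def modelFunctor : C ⥤ S.Localization where
  obj X := S.Q.obj (hP.model X)
  map f := hP.modelMap f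
  map_id X := hP.modelMap_eq _ (by simp)
  map_comp {_ Y _} f g := hP.modelMap_eq _ (by
    rw [Category.assoc, modelMap_comp_modelHom, Functor.map_comp S.Q (hP.modelHom Y) g,
      ← Category.assoc, modelMap_comp_modelHom, ← Functor.map_comp, Category.assoc])

theorem modelFunctor_inverts [W.IsStableUnderComposition] :
    W.IsInvertedBy hP.modelFunctor := by
  intro X Y w hw
  have hεw : W (hP.modelHom X ≫ w) := W.comp_mem _ _ (hP.modelHom_mem X) hw
  obtain ⟨v, hv⟩ := hP.exists_lift _ hεw _ (hP.prop_model Y) (hP.modelHom Y)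
  refine ⟨v, hP.lift_unique _ hεw _ (hP.prop_model X) ?_,
    hP.lift_unique _ (hP.modelHom_mem Y) _ (hP.prop_model Y) ?_⟩
  · change (hP.modelMap w ≫ v) ≫ S.Q.map (hP.modelHom X ≫ w) = 𝟙 _ ≫ _
    rw [Category.assoc, hv, modelMap_comp_modelHom, Category.id_comp]
  · change (v ≫ hP.modelMap w) ≫ S.Q.map (hP.modelHom Y) = 𝟙 _ ≫ _
    rw [Category.assoc, modelMap_comp_modelHom, hv, Category.id_comp]

variable [W.IsStableUnderComposition]

noncomputable def modelLocMap {X Y : C} (ψ : W.Q.obj X ⟶ W.Q.obj Y) :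
    S.Q.obj (hP.model X) ⟶ S.Q.obj (hP.model Y) :=
  (lift _ hP.modelFunctor_inverts).map ψ

-- The `eqToHom`s produced by `fac` are between definitionally equal objects.
theorem modelLocMap_Q_map {X Y : C} (f : X ⟶ Y) :
    hP.modelLocMap (W.Q.map f) = hP.modelMap f :=
  (Functor.congr_hom (fac _ hP.modelFunctor_inverts) f).trans
    ((Category.id_comp _).trans (Category.comp_id _))

variable (hsat : ∀ ⦃X Y : C⦄ (f : X ⟶ Y), S f → IsIso (W.Q.map f))

theorem modelLocMap_gammaPrime_map_comp {X Y : C} (β : S.Q.obj X ⟶ S.Q.obj Y) :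
    hP.modelLocMap ((gammaPrime S W hsat).map β) ≫ S.Q.map (hP.modelHom Y) =
      S.Q.map (hP.modelHom X) ≫ β := by
  let ε : S.Q ⋙ gammaPrime S W hsat ⋙ lift _ hP.modelFunctor_inverts ⟶ S.Q ⋙ 𝟭 _ :=
    { app X := S.Q.map (hP.modelHom X)
      naturality _ _ f := (congrArg (· ≫ _) (hP.modelLocMap_Q_map f)).trans
        ((hP.modelMap_comp_modelHom f).trans (S.Q.map_comp _ _)) }
  have := (natTransExtension ε).naturality β
  simp only [natTransExtension_app, NatTransExtension.app_eq] at this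
  exact this

theorem gammaPrime_map_modelLocMap_comp {X Y : C} (ψ : W.Q.obj X ⟶ W.Q.obj Y) :
    (gammaPrime S W hsat).map (hP.modelLocMap ψ) ≫ W.Q.map (hP.modelHom Y) =
      W.Q.map (hP.modelHom X) ≫ ψ := by
  let γ := gammaPrime S W hsat
  let ε : W.Q ⋙ lift _ hP.modelFunctor_inverts ⋙ γ ⟶ W.Q ⋙ 𝟭 _ :=
    { app X := W.Q.map (hP.modelHom X)
      naturality _ _ f :=
        (congrArg (fun g => γ.map g ≫ _) (hP.modelLocMap_Q_map f)).trans <|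
        (γ.map_comp _ _).symm.trans <|
        (congrArg γ.map (hP.modelMap_comp_modelHom f)).trans (W.Q.map_comp _ _) }
  have := (natTransExtension ε).naturality ψ
  simp only [natTransExtension_app, NatTransExtension.app_eq] at this
  exact this

end

variable [W.IsStableUnderComposition]

theorem gammaPrime_map_injective (hP : LiftingSubcategory S W P)
    (hsat : ∀ ⦃X Y : C⦄ (f : X ⟶ Y), S f → IsIso (W.Q.map f)) {M : C} (hM : P M) (X : C) :
    Function.Injective (fun β : S.Q.obj M ⟶ S.Q.obj X => (gammaPrime S W hsat).map β) := by
  obtain ⟨e, he⟩ := hP.exists_comp_modelHom_eq_id hM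
  have retract (β : S.Q.obj M ⟶ S.Q.obj X) :
      e ≫ hP.modelLocMap ((gammaPrime S W hsat).map β) ≫ S.Q.map (hP.modelHom X) = β :=
    (congrArg (e ≫ ·) (hP.modelLocMap_gammaPrime_map_comp hsat β)).trans
      (by rw [← Category.assoc, he, Category.id_comp])
  intro β₁ β₂ h
  rw [← retract β₁, ← retract β₂]
  exact congrArg (fun ψ => e ≫ hP.modelLocMap ψ ≫ S.Q.map (hP.modelHom X)) h

theorem gammaPrime_map_surjective (hP : LiftingSubcategory S W P)
    (hsat : ∀ ⦃X Y : C⦄ (f : X ⟶ Y), S f → IsIso (W.Q.map f)) {M : C} (hM : P M) {X : C}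
    (ψ : W.Q.obj M ⟶ W.Q.obj X) :
    ∃ β : S.Q.obj M ⟶ S.Q.obj X, (gammaPrime S W hsat).map β = ψ := by
  let γ := gammaPrime S W hsat
  obtain ⟨e, he⟩ := hP.exists_comp_modelHom_eq_id hM
  have hγe : γ.map e ≫ W.Q.map (hP.modelHom M) = 𝟙 (W.Q.obj M) :=
    (γ.map_comp _ _).symm.trans ((congrArg γ.map he).trans (γ.map_id _))
  refine ⟨e ≫ hP.modelLocMap ψ ≫ S.Q.map (hP.modelHom X),
    (γ.map_comp _ _).trans ((congrArg _ (γ.map_comp _ _)).trans ?_)⟩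
  exact (congrArg _ (hP.gammaPrime_map_modelLocMap_comp hsat ψ)).trans
    ((Category.assoc _ _ _).symm.trans ((congrArg (· ≫ ψ) hγe).trans (Category.id_comp ψ)))

theorem cofibrant (hP : LiftingSubcategory S W P)
    (hsat : ∀ ⦃X Y : C⦄ (f : X ⟶ Y), S f → IsIso (W.Q.map f)) {M : C} (hM : P M) :
    Cofibrant S W M := by
  intro Y X w hw
  refine ⟨hP.lift_unique w hw M hM, fun φ => ?_⟩
  obtain ⟨β, hβ⟩ := hP.gammaPrime_map_surjective hsat hM
    ((gammaPrime S W hsat).map φ ≫ (wIso w hw).inv)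
  refine ⟨β, hP.gammaPrime_map_injective hsat hM X ?_⟩
  change (gammaPrime S W hsat).map (β ≫ S.Q.map w) = (gammaPrime S W hsat).map φ
  rw [Functor.map_comp, gammaPrime_map_Q_map]
  exact (congrArg (· ≫ (wIso w hw).hom) hβ).trans ((Category.assoc _ _ _).trans
    ((congrArg _ (wIso w hw).inv_hom_id).trans (Category.comp_id _)))

theorem leftCE (hP : LiftingSubcategory S W P)
    (hsat : ∀ ⦃X Y : C⦄ (f : X ⟶ Y), S f → IsIso (W.Q.map f)) : LeftCE S W hsat := by
  intro X
  obtain ⟨M, ε, hM, hε⟩ := hP.exists_model X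
  exact ⟨M, S.Q.map ε, hP.cofibrant hsat hM, W.Q_inverts ε hε⟩

theorem isEquivalence_inducedFunctor_comp_gammaPrime (hP : LiftingSubcategory S W P)
    (hsat : ∀ ⦃X Y : C⦄ (f : X ⟶ Y), S f → IsIso (W.Q.map f)) :
    (inducedFunctor (fun M : {M : C // P M} => S.Q.obj M.1) ⋙
      gammaPrime S W hsat).IsEquivalence where
  faithful := ⟨fun {X Y} _ _ h =>
    InducedCategory.hom_ext (hP.gammaPrime_map_injective hsat X.2 Y.1 h)⟩
  full := ⟨fun {X _} ψ =>
    let ⟨β, hβ⟩ := hP.gammaPrime_map_surjective hsat X.2 ψ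
    ⟨InducedCategory.homMk β, hβ⟩⟩
  essSurj.mem_essImage := by
    rintro ⟨⟨X⟩⟩
    obtain ⟨M, ε, hM, hε⟩ := hP.exists_model X
    exact ⟨⟨M, hM⟩, ⟨wIso ε hε⟩⟩

end LiftingSubcategory

/-- Suppose `M` is a full subcategory (given by a predicate `P`) such that:
(i) morphisms of `C` from objects of `M` lift along weak equivalences up to strong
equivalence; (ii) composition with weak equivalences is injective on `C[S⁻¹]`-morphisms
from objects of `M`; and (iii) every object receives a weak equivalence from an object of
`M`. Then every object of `M` is cofibrant, `(C, S, W)` is a left Cartan-Eilenberg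
category, and the functor `M[S⁻¹, C] ⥤ C[W⁻¹]` is an equivalence of categories. -/
theorem theoremF (S W : MorphismProperty C) (hsw : StrongWeak S W) (P : C → Prop)
    (h1 : ∀ ⦃Y X : C⦄ (w : Y ⟶ X), W w → ∀ (M : C), P M → ∀ f : M ⟶ X,
      ∃ g : S.Q.obj M ⟶ S.Q.obj Y, g ≫ S.Q.map w = S.Q.map f)
    (h2 : ∀ ⦃Y X : C⦄ (w : Y ⟶ X), W w → ∀ (M : C), P M →
      Function.Injective (fun g : S.Q.obj M ⟶ S.Q.obj Y => g ≫ S.Q.map w))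
    (h3 : ∀ X : C, ∃ (M : C) (ε : M ⟶ X), P M ∧ W ε) :
    (∀ M : C, P M → Cofibrant S W M) ∧
    LeftCE S W hsw.le_sat ∧
    ((inducedFunctor (fun M : {M : C // P M} => S.Q.obj M.1) ⋙
        gammaPrime S W hsw.le_sat).IsEquivalence) := by
  have : W.IsStableUnderComposition := ⟨fun f g => hsw.comp_W f g⟩
  have hP : LiftingSubcategory S W P := ⟨h1, h2, h3⟩
  exact ⟨fun _ => hP.cofibrant hsw.le_sat, hP.leftCE hsw.le_sat,
    hP.isEquivalence_inducedFunctor_comp_gammaPrime hsw.le_sat⟩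
end

section
/- Let (C, S, W) be a category with strong and weak equivalences admitting a left resolvent functor (R, ε): R : C → C with R(X) cofibrant for every X, and ε : R ⟹ id_C with ε_X in the saturation of W for each X. Then the saturation of W equals the preimage under R of the saturation of S; in particular R carries S into the saturation of S, and for every object X both R(ε_X) and ε_{R(X)} lie in the saturation of S. -/
open CategoryTheory

universe v u

variable {C : Type u} [Category.{v} C]

/-- Any functor inverting `W` inverts the saturation of `W`. -/
lemma isIso_map_of_isInvertedBy {D : Type*} [Category D] (W : MorphismProperty C)
    (F : C ⥤ D) (hF : W.IsInvertedBy F) {X Y : C} (f : X ⟶ Y)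
    (hf : IsIso (W.Q.map f)) : IsIso (F.map f) := by
  rw [← Localization.Construction.fac F hF]
  show IsIso ((Localization.Construction.lift F hF).map (W.Q.map f))
  infer_instance

/-- Cofibrancy extends from `W` to the saturation of `W`. -/
lemma bij_of_sat (S W : MorphismProperty C) {M : C} (hM : Cofibrant S W M)
    {Y X : C} (w : Y ⟶ X) (hw : IsIso (W.Q.map w)) :
    Function.Bijective (fun g : S.Q.obj M ⟶ S.Q.obj Y => g ≫ S.Q.map w) := by
  have hF : W.IsInvertedBy (S.Q ⋙ coyoneda.obj (Opposite.op (S.Q.obj M))) := by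
    intro A B u hu
    rw [CategoryTheory.isIso_iff_bijective]
    exact hM u hu
  have h := isIso_map_of_isInvertedBy W _ hF w hw
  rw [CategoryTheory.isIso_iff_bijective] at h
  exact h

/-- A morphism between cofibrant objects lying in the saturation of `W` is inverted by
`S.Q`. -/
lemma isIso_SQ_of_cofibrant (S W : MorphismProperty C) {M N : C}
    (hM : Cofibrant S W M) (hN : Cofibrant S W N) (s : M ⟶ N)
    (hs : IsIso (W.Q.map s)) : IsIso (S.Q.map s) := by
  obtain ⟨g, hg'⟩ := (bij_of_sat S W hN s hs).2 (𝟙 _)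
  have hg : g ≫ S.Q.map s = 𝟙 _ := hg'
  have h2 : S.Q.map s ≫ g = 𝟙 _ := by
    apply (bij_of_sat S W hM s hs).1
    show (S.Q.map s ≫ g) ≫ S.Q.map s = 𝟙 _ ≫ S.Q.map s
    rw [Category.assoc, hg, Category.comp_id, Category.id_comp]
  exact ⟨g, h2, hg⟩

/-- Let `(R, ε)` be a left resolvent functor: `R X` is cofibrant for each `X` and each
`ε_X : R X ⟶ X` lies in the saturation of `W`. Then the saturation of `W` is the preimage
under `R` of the saturation of `S`; in particular `R` carries `S` into the saturation of
`S`, and `R(ε_X)` and `ε_{R X}` lie in the saturation of `S` for every `X`. -/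
theorem resolvent_properties (S W : MorphismProperty C) (hsw : StrongWeak S W)
    (R : C ⥤ C) (ε : R ⟶ 𝟭 C)
    (hcof : ∀ X : C, Cofibrant S W (R.obj X))
    (hε : ∀ X : C, IsIso (W.Q.map (ε.app X))) :
    (∀ ⦃X Y : C⦄ (f : X ⟶ Y), IsIso (W.Q.map f) ↔ IsIso (S.Q.map (R.map f))) ∧
    (∀ ⦃X Y : C⦄ (f : X ⟶ Y), S f → IsIso (S.Q.map (R.map f))) ∧
    (∀ X : C, IsIso (S.Q.map (R.map (ε.app X))) ∧ IsIso (S.Q.map (ε.app (R.obj X)))) := by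
  have hWS : S.IsInvertedBy W.Q := fun _ _ f hf => hsw.le_sat f hf
  have nat : ∀ ⦃X Y : C⦄ (f : X ⟶ Y),
      W.Q.map (R.map f) ≫ W.Q.map (ε.app Y) = W.Q.map (ε.app X) ≫ W.Q.map f := by
    intro X Y f
    rw [← W.Q.map_comp, ← W.Q.map_comp, ε.naturality]
    rfl
  have main : ∀ ⦃X Y : C⦄ (f : X ⟶ Y), IsIso (W.Q.map f) ↔ IsIso (S.Q.map (R.map f)) := by
    intro X Y f
    constructor
    · intro hf
      have hεX := hε X
      have hεY := hε Y
      have h1 : IsIso (W.Q.map (R.map f) ≫ W.Q.map (ε.app Y)) := by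
        rw [nat f]; infer_instance
      have h2 : IsIso (W.Q.map (R.map f)) := by
        have : W.Q.map (R.map f) =
            (W.Q.map (R.map f) ≫ W.Q.map (ε.app Y)) ≫ inv (W.Q.map (ε.app Y)) := by
          simp
        rw [this]; infer_instance
      exact isIso_SQ_of_cofibrant S W (hcof X) (hcof Y) (R.map f) h2
    · intro hf
      have h2 : IsIso (W.Q.map (R.map f)) :=
        isIso_map_of_isInvertedBy S W.Q hWS (R.map f) hf
      have hεX := hε X
      have hεY := hε Y
      have : W.Q.map f =
          inv (W.Q.map (ε.app X)) ≫ W.Q.map (R.map f) ≫ W.Q.map (ε.app Y) := by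
        rw [nat f]; simp
      rw [this]; infer_instance
  refine ⟨main, fun X Y f hf => (main f).1 (hsw.le_sat f hf), fun X => ⟨?_, ?_⟩⟩
  · exact (main (ε.app X)).1 (hε X)
  · exact isIso_SQ_of_cofibrant S W (hcof (R.obj X)) (hcof X) (ε.app (R.obj X))
      (hε (R.obj X))
end

section
/- Let C be a category, S a class of morphisms of C (closed under composition, containing isomorphisms), R : C → C a functor and ε : R ⟹ id a natural transformation such that R(S) ⊆ S, R(ε_X) ∈ S, and ε_{R(X)} ∈ S for each object X. Set W = R⁻¹(saturation of S). Then S ⊆ W and (R, ε) is a left resolvent functor for (C, S, W), which is therefore a left Cartan-Eilenberg category, and an object X is cofibrant if and only if ε_X is an isomorphism in C[S⁻¹]. -/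
open CategoryTheory

universe v u

variable {C : Type u} [Category.{v} C]

/-- Auxiliary: the functor `R` descends to the localization, together with the
key exchange identity coming from the descended natural transformation `ε`. -/
lemma exists_lift_aux (S : MorphismProperty C) (R : C ⥤ C) (ε : R ⟶ 𝟭 C)
    (hRS : ∀ ⦃X Y : C⦄ (f : X ⟶ Y), S f → S (R.map f)) :
    ∃ (R' : S.Localization ⥤ S.Localization) (e : S.Q ⋙ R' ≅ R ⋙ S.Q),
      ∀ ⦃A B : C⦄ (g : S.Q.obj A ⟶ S.Q.obj B),
        R'.map g ≫ e.hom.app B ≫ S.Q.map (ε.app B) =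
          e.hom.app A ≫ S.Q.map (ε.app A) ≫ g := by
  have hinv : S.IsInvertedBy (R ⋙ S.Q) :=
    fun X Y f hf => Localization.inverts S.Q S _ (hRS f hf)
  refine ⟨Localization.lift (R ⋙ S.Q) hinv S.Q,
    Localization.Lifting.iso S.Q S (R ⋙ S.Q) _, ?_⟩
  intro A B g
  let τ : R ⋙ S.Q ⟶ S.Q :=
    { app := fun X => S.Q.map (ε.app X)
      naturality := fun X Y f => by
        dsimp
        simp only [← Functor.map_comp, NatTrans.naturality, Functor.id_map] }
  have happ : ∀ X : C,
      (Localization.liftNatTrans S.Q S (R ⋙ S.Q) S.Q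
        (Localization.lift (R ⋙ S.Q) hinv S.Q) (𝟭 _) τ).app (S.Q.obj X) =
      (Localization.Lifting.iso S.Q S (R ⋙ S.Q)
        (Localization.lift (R ⋙ S.Q) hinv S.Q)).hom.app X ≫ S.Q.map (ε.app X) := by
    intro X
    rw [Localization.liftNatTrans_app]
    dsimp [τ, Localization.Lifting.iso]
    simp
  have key := (Localization.liftNatTrans S.Q S (R ⋙ S.Q) S.Q
      (Localization.lift (R ⋙ S.Q) hinv S.Q) (𝟭 _) τ).naturality g
  rw [happ, happ] at key
  simpa using key

/-- Let `S` be a class of morphisms closed under composition and containing the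
isomorphisms, `R : C ⥤ C` a functor and `ε : R ⟹ 𝟭` such that `R(S) ⊆ S`,
`R(ε_X) ∈ S` and `ε_{R X} ∈ S` for each `X`. Set
`W = R⁻¹(saturation of S) = { f | S.Q.map (R.map f) is an isomorphism }`.
Then `S ⊆ W`, `(R, ε)` is a left resolvent functor for `(C, S, W)` (so each `R X` is
cofibrant and each `ε_X` lies in the saturation of `W`), `(C, S, W)` is a left
Cartan-Eilenberg category (every object has a cofibrant left model, here witnessed in
`C` itself by `ε_X : R X ⟶ X ∈ W`), and an object `X` is cofibrant if and only if
`ε_X` becomes an isomorphism in `C[S⁻¹]`. -/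
theorem theoremMA (S : MorphismProperty C)
    (comp_S : ∀ ⦃X Y Z : C⦄ (f : X ⟶ Y) (g : Y ⟶ Z), S f → S g → S (f ≫ g))
    (iso_S : ∀ ⦃X Y : C⦄ (f : X ⟶ Y), IsIso f → S f)
    (R : C ⥤ C) (ε : R ⟶ 𝟭 C)
    (hRS : ∀ ⦃X Y : C⦄ (f : X ⟶ Y), S f → S (R.map f))
    (hRε : ∀ X : C, S (R.map (ε.app X)))
    (hεR : ∀ X : C, S (ε.app (R.obj X)))
    (W : MorphismProperty C)
    (hW : ∀ ⦃X Y : C⦄ (f : X ⟶ Y), W f ↔ IsIso (S.Q.map (R.map f))) :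
    (∀ ⦃X Y : C⦄ (f : X ⟶ Y), S f → W f) ∧
    (∀ X : C, Cofibrant S W (R.obj X)) ∧
    (∀ X : C, IsIso (W.Q.map (ε.app X))) ∧
    (∀ X : C, W (ε.app X)) ∧
    (∀ X : C, Cofibrant S W X ↔ IsIso (S.Q.map (ε.app X))) := by
  have hQ : ∀ {X Y : C} (f : X ⟶ Y), S f → IsIso (S.Q.map f) :=
    fun f hf => Localization.inverts S.Q S f hf
  have part1 : ∀ ⦃X Y : C⦄ (f : X ⟶ Y), S f → W f := by
    intro X Y f hf
    rw [hW]
    exact hQ _ (hRS f hf)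
  have part4 : ∀ X : C, W (ε.app X) := by
    intro X; rw [hW]; exact hQ _ (hRε X)
  have part3 : ∀ X : C, IsIso (W.Q.map (ε.app X)) :=
    fun X => Localization.inverts W.Q W _ (part4 X)
  obtain ⟨R', e, star⟩ := exists_lift_aux S R ε hRS
  -- naturality of `e`, packaged
  have hnat : ∀ {A B : C} (f : A ⟶ B),
      R'.map (S.Q.map f) ≫ e.hom.app B = e.hom.app A ≫ S.Q.map (R.map f) := by
    intro A B f
    simpa using e.hom.naturality f
  -- the main cofibrancy lemma
  have cofib : ∀ (M : C), IsIso (S.Q.map (ε.app M)) → Cofibrant S W M := by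
    intro M hM Y X0 w hw
    have hw' : IsIso (S.Q.map (R.map w)) := (hW w).mp hw
    have hεM : IsIso (S.Q.map (ε.app M)) := hM
    constructor
    · intro g₁ g₂ h
      dsimp at h
      have h2 : R'.map g₁ ≫ e.hom.app Y = R'.map g₂ ≫ e.hom.app Y := by
        have c1 : R'.map g₁ ≫ e.hom.app Y ≫ S.Q.map (R.map w) =
            R'.map g₂ ≫ e.hom.app Y ≫ S.Q.map (R.map w) := by
          calc R'.map g₁ ≫ e.hom.app Y ≫ S.Q.map (R.map w)
              = R'.map g₁ ≫ R'.map (S.Q.map w) ≫ e.hom.app X0 := by rw [← hnat w]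
            _ = R'.map (g₁ ≫ S.Q.map w) ≫ e.hom.app X0 := by
                rw [Functor.map_comp, Category.assoc]
            _ = R'.map (g₂ ≫ S.Q.map w) ≫ e.hom.app X0 := by rw [h]
            _ = R'.map g₂ ≫ R'.map (S.Q.map w) ≫ e.hom.app X0 := by
                rw [Functor.map_comp, Category.assoc]
            _ = R'.map g₂ ≫ e.hom.app Y ≫ S.Q.map (R.map w) := by rw [hnat w]
        simpa only [← Category.assoc] using
          (cancel_mono (S.Q.map (R.map w))).1 (by simpa only [Category.assoc] using c1)
      have h3 : e.hom.app M ≫ S.Q.map (ε.app M) ≫ g₁ =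
          e.hom.app M ≫ S.Q.map (ε.app M) ≫ g₂ := by
        rw [← star g₁, ← star g₂, ← Category.assoc, ← Category.assoc, h2]
      have h4 := (cancel_epi (e.hom.app M)).1 h3
      exact (cancel_epi (S.Q.map (ε.app M))).1 h4
    · intro g
      refine ⟨inv (S.Q.map (ε.app M)) ≫ inv (e.hom.app M) ≫ R'.map g ≫
        e.hom.app X0 ≫ inv (S.Q.map (R.map w)) ≫ S.Q.map (ε.app Y), ?_⟩
      dsimp
      have hεw : S.Q.map (ε.app Y) ≫ S.Q.map w = S.Q.map (R.map w) ≫ S.Q.map (ε.app X0) := by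
        rw [← Functor.map_comp, ← Functor.map_comp]
        congr 1
        simpa using ε.naturality w
      simp only [Category.assoc]
      rw [hεw, IsIso.inv_hom_id_assoc]
      have := star g
      rw [this]
      simp
  have part2 : ∀ X : C, Cofibrant S W (R.obj X) := fun X => cofib _ (hQ _ (hεR X))
  refine ⟨part1, part2, part3, part4, ?_⟩
  intro X
  constructor
  · intro hc
    obtain ⟨s, hs⟩ := (hc (ε.app X) (part4 X)).2 (𝟙 _)
    dsimp at hs
    have hRX := part2 X
    have hinj := (hRX (ε.app X) (part4 X)).1
    have h2 : S.Q.map (ε.app X) ≫ s = 𝟙 _ := by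
      apply hinj
      dsimp
      rw [Category.assoc, hs, Category.comp_id, Category.id_comp]
    exact ⟨s, h2, hs⟩
  · exact cofib X
end

section
/- Let (C, W) be a category with weak equivalences and D any category. The assignment F ↦ L_W F together with the canonical transformations θ_F : L_W F ⟹ F defines a coidempotent functor on the full subcategory Cat'((C,W), D) of left derivable functors: θ_{L F} and L(θ_F) are isomorphisms (indeed identities up to canonical isomorphism), and L(θ_F) = θ_{L F}. -/
open CategoryTheory

universe v u v' u'

namespace CategoryTheory.Functor

variable {C D H : Type*} [Category* C] [Category* D] [Category* H] {L : C ⥤ D}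

/-- A functor `L ⋙ G` inverts `W`, so its left derived functor is `G` itself and the counit of
any right Kan extension of it along `L` is invertible. -/
lemma isIso_of_isRightKanExtension_of_isLocalization (W : MorphismProperty C)
    [L.IsLocalization W] (G E : D ⥤ H) (α : L ⋙ E ⟶ L ⋙ G)
    [E.IsRightKanExtension α] : IsIso α :=
  have : E.IsLeftDerivedFunctor α W := ⟨inferInstance⟩
  isIso_of_isLeftDerivedFunctor_of_inverts E α
    (MorphismProperty.IsInvertedBy.of_comp W L (Localization.inverts L W) G)

/-- Whiskering with `L` is full, so `β = whiskerLeft L β₀`, and `β₀` is the lift of `β ≫ θ`. -/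
lemma whiskerLeft_liftOfIsRightKanExtension_comp (W : MorphismProperty C)
    [L.IsLocalization W] {F : C ⥤ H} (E : D ⥤ H) (θ : L ⋙ E ⟶ F)
    [E.IsRightKanExtension θ] (G : D ⥤ H) (β : L ⋙ G ⟶ L ⋙ E) :
    whiskerLeft L (E.liftOfIsRightKanExtension θ G (β ≫ θ)) = β := by
  have := Localization.full_whiskeringLeft L W H
  obtain ⟨β₀, rfl⟩ := ((whiskeringLeft C D H).obj L).map_surjective β
  have hlift : E.liftOfIsRightKanExtension θ G (whiskerLeft L β₀ ≫ θ) = β₀ :=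
    E.hom_ext_of_isRightKanExtension θ _ _ (by simp)
  exact congrArg (whiskerLeft L) hlift

end CategoryTheory.Functor

open Functor in
/-- Coidempotency of the left derived functor construction on left derivable functors.
Let `F : C ⥤ D` be left derivable, witnessed by a right Kan extension `(RF, θ)` of `F`
along the localisation functor `γ = W.Q`, so that `L F = γ ⋙ RF` and `θ_F = θ`.
Let `(RLF, θ')` be any right Kan extension of `L F = γ ⋙ RF` along `γ`, so that
`L (L F) = γ ⋙ RLF` and `θ_{L F} = θ'`.  Then `θ_{L F}` is an isomorphism, and
`L (θ_F)` — the transformation `L (L F) ⟶ L F` obtained by whiskering with `γ` the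
morphism of Kan extensions induced by `θ' ≫ θ` — equals `θ_{L F}`; in particular
`L (θ_F)` is an isomorphism as well.  Hence `(L, θ)` is a coidempotent functor on the
category of left derivable functors. -/
theorem derived_coidempotent {C : Type u} [Category.{v} C] {D : Type u'} [Category.{v'} D]
    (W : MorphismProperty C) (F : C ⥤ D)
    (RF : W.Localization ⥤ D) (θ : W.Q ⋙ RF ⟶ F) [RF.IsRightKanExtension θ]
    (RLF : W.Localization ⥤ D) (θ' : W.Q ⋙ RLF ⟶ W.Q ⋙ RF)
    [RLF.IsRightKanExtension θ'] :
    IsIso θ' ∧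
    Functor.whiskerLeft W.Q (RF.liftOfIsRightKanExtension θ RLF (θ' ≫ θ)) = θ' :=
  ⟨isIso_of_isRightKanExtension_of_isLocalization W RF RLF θ',
    whiskerLeft_liftOfIsRightKanExtension_comp W RF θ RLF θ'⟩
end

section
/- Let Q → R be a monomorphism j of bounded-below chain complexes in an abelian category A whose cokernel P is projective in each degree, let w : Y → X be a quasi-isomorphism, F : R → X and φ : Q → Y chain maps, and λ a chain homotopy from w∘φ to F∘j. Then there exists a chain map G : R → Y with G∘j = φ and a chain homotopy H from w∘G to F with H∘j = λ. -/
open CategoryTheory CategoryTheory.Limits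

universe v u

namespace LiftingUpToHomotopyAux

variable {A : Type u} [Category.{v} A] [Abelian A]

lemma next_eq (m : ℕ) : (ComplexShape.down ℕ).next m = m - 1 := by
  cases m with
  | zero => exact ChainComplex.next_nat_zero
  | succ k => exact ChainComplex.next_nat_succ k

/-- A morphism to the cycles of a chain complex whose homology class vanishes lifts,
through a projective object, to the next level of the complex. -/
lemma cycle_lift (K : ChainComplex A ℕ) (i : ℕ) {P : A} [Projective P]
    (ζ : P ⟶ K.cycles i) (hζ : ζ ≫ K.homologyπ i = 0) :
    ∃ q : P ⟶ K.X (i + 1), q ≫ K.toCycles (i + 1) i = ζ := by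
  let S := ShortComplex.mk (K.toCycles (i + 1) i) (K.homologyπ i)
    (K.toCycles_comp_homologyπ (i + 1) i)
  have hS : S.Exact := S.exact_of_g_is_cokernel
    (K.homologyIsCokernel (i + 1) i (by simp [ChainComplex.prev]))
  have := hS.epi_toCycles
  refine ⟨Projective.factorThru (S.liftCycles ζ hζ) S.toCycles, ?_⟩
  have h1 : Projective.factorThru (S.liftCycles ζ hζ) S.toCycles ≫ S.toCycles =
      S.liftCycles ζ hζ := Projective.factorThru_comp _ _
  have h2 : K.toCycles (i + 1) i = S.toCycles ≫ S.iCycles := (S.toCycles_i).symm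
  rw [h2, ← Category.assoc, h1, ShortComplex.liftCycles_i]

/-- Correcting a cycle-lift to a full lift up to boundary, through a quasi-isomorphism. -/
lemma partB {X Y : ChainComplex A ℕ} (w : Y ⟶ X) [QuasiIso w] {P : A} [Projective P]
    (m : ℕ) (c₂ : P ⟶ X.X m) (g₀ : P ⟶ Y.X m)
    (hcyc : (c₂ - g₀ ≫ w.f m) ≫ X.d m (m - 1) = 0) :
    ∃ (g : P ⟶ Y.X m) (t : P ⟶ X.X (m + 1)),
      g ≫ Y.d m (m - 1) = g₀ ≫ Y.d m (m - 1) ∧ g ≫ w.f m + t ≫ X.d (m + 1) m = c₂ := by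
  haveI : IsIso (HomologicalComplex.homologyMap w m) :=
    (quasiIsoAt_iff_isIso_homologyMap w m).1 inferInstance
  set ζ := X.liftCycles (c₂ - g₀ ≫ w.f m) (m - 1) (next_eq m) hcyc with hζdef
  set u := ζ ≫ X.homologyπ m ≫ CategoryTheory.inv (HomologicalComplex.homologyMap w m)
    with hudef
  set z := Projective.factorThru u (Y.homologyπ m) with hzdef
  have hzπ : z ≫ Y.homologyπ m = u := Projective.factorThru_comp _ _
  set g := g₀ + z ≫ Y.iCycles m with hgdef
  have hresid : (c₂ - g ≫ w.f m) ≫ X.d m (m - 1) = 0 := by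
    have : (c₂ - g ≫ w.f m) = (c₂ - g₀ ≫ w.f m) - z ≫ Y.iCycles m ≫ w.f m := by
      rw [hgdef]; simp only [Preadditive.add_comp, Category.assoc]; abel
    rw [this, Preadditive.sub_comp, hcyc, zero_sub, neg_eq_zero]
    rw [Category.assoc, Category.assoc, HomologicalComplex.Hom.comm w m (m-1),
      ← Category.assoc (Y.iCycles m), HomologicalComplex.iCycles_d, zero_comp, comp_zero]
  set ζ' := X.liftCycles (c₂ - g ≫ w.f m) (m - 1) (next_eq m) hresid with hζ'def
  have e1 : ζ' = ζ - z ≫ HomologicalComplex.cyclesMap w m := by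
    rw [← cancel_mono (X.iCycles m), Preadditive.sub_comp, hζ'def, hζdef,
      HomologicalComplex.liftCycles_i, HomologicalComplex.liftCycles_i, Category.assoc,
      HomologicalComplex.cyclesMap_i, hgdef]
    simp only [Preadditive.add_comp, Category.assoc]
    abel
  have hζ'π : ζ' ≫ X.homologyπ m = 0 := by
    rw [e1, Preadditive.sub_comp, Category.assoc, ← HomologicalComplex.homologyπ_naturality,
      ← Category.assoc, hzπ, hudef]
    simp
  obtain ⟨t, ht⟩ := cycle_lift X m ζ' hζ'π
  have ht' : t ≫ X.d (m + 1) m = c₂ - g ≫ w.f m := by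
    rw [← X.toCycles_i (m+1) m, ← Category.assoc, ht, hζ'def, HomologicalComplex.liftCycles_i]
  refine ⟨g, t, ?_, ?_⟩
  · rw [hgdef, Preadditive.add_comp, Category.assoc, HomologicalComplex.iCycles_d, comp_zero,
      add_zero]
  · rw [ht']; abel

/-- Lifting a "relative cycle" through a quasi-isomorphism, successor degree. -/
lemma quasi_lift_succ {X Y : ChainComplex A ℕ} (w : Y ⟶ X) [QuasiIso w] {P : A} [Projective P]
    (k : ℕ) (c₁ : P ⟶ Y.X k) (c₂ : P ⟶ X.X (k + 1))
    (h0 : c₁ ≫ Y.d k (k - 1) = 0)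
    (hw : c₁ ≫ w.f k = c₂ ≫ X.d (k + 1) k) :
    ∃ (g : P ⟶ Y.X (k + 1)) (t : P ⟶ X.X (k + 2)),
      g ≫ Y.d (k + 1) k = c₁ ∧ g ≫ w.f (k + 1) + t ≫ X.d (k + 2) (k + 1) = c₂ := by
  haveI : IsIso (HomologicalComplex.homologyMap w k) :=
    (quasiIsoAt_iff_isIso_homologyMap w k).1 inferInstance
  set ζ₁ := Y.liftCycles c₁ (k - 1) (next_eq k) h0 with hζ₁def
  have hbd : (c₂ ≫ X.d (k + 1) k) ≫ X.d k (k - 1) = 0 := by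
    rw [Category.assoc, HomologicalComplex.d_comp_d, comp_zero]
  have e2 : ζ₁ ≫ HomologicalComplex.cyclesMap w k =
      X.liftCycles (c₂ ≫ X.d (k + 1) k) (k - 1) (next_eq k) hbd := by
    rw [← cancel_mono (X.iCycles k), Category.assoc, HomologicalComplex.cyclesMap_i,
      HomologicalComplex.liftCycles_i, ← Category.assoc, hζ₁def,
      HomologicalComplex.liftCycles_i, hw]
  have hζ₁π : ζ₁ ≫ Y.homologyπ k = 0 := by
    rw [← cancel_mono (HomologicalComplex.homologyMap w k), zero_comp, Category.assoc,
      HomologicalComplex.homologyπ_naturality, ← Category.assoc, e2]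
    exact X.liftCycles_homologyπ_eq_zero_of_boundary (c₂ ≫ X.d (k + 1) k) (k - 1)
      (next_eq k) c₂ rfl
  obtain ⟨g₀, hg₀⟩ := cycle_lift Y k ζ₁ hζ₁π
  have hg₀d : g₀ ≫ Y.d (k + 1) k = c₁ := by
    rw [← Y.toCycles_i (k + 1) k, ← Category.assoc, hg₀, hζ₁def,
      HomologicalComplex.liftCycles_i]
  obtain ⟨g, t, h1, h2⟩ := partB w (k + 1) c₂ g₀
    (show (c₂ - g₀ ≫ w.f (k + 1)) ≫ X.d (k + 1) k = 0 by
      rw [Preadditive.sub_comp, Category.assoc, HomologicalComplex.Hom.comm w (k+1) k,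
        ← Category.assoc, hg₀d, hw, sub_self])
  have h1' : g ≫ Y.d (k + 1) k = g₀ ≫ Y.d (k + 1) k := h1
  exact ⟨g, t, by rw [h1', hg₀d], h2⟩

/-- Lifting a "relative cycle" through a quasi-isomorphism. -/
lemma quasi_lift {X Y : ChainComplex A ℕ} (w : Y ⟶ X) [QuasiIso w] {P : A} [Projective P]
    (m : ℕ) (c₁ : P ⟶ Y.X (m - 1)) (c₂ : P ⟶ X.X m)
    (h0 : c₁ ≫ Y.d (m - 1) (m - 1 - 1) = 0)
    (hz : m = 0 → c₁ = 0)
    (hw : c₁ ≫ w.f (m - 1) = c₂ ≫ X.d m (m - 1)) :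
    ∃ (g : P ⟶ Y.X m) (t : P ⟶ X.X (m + 1)),
      g ≫ Y.d m (m - 1) = c₁ ∧ g ≫ w.f m + t ≫ X.d (m + 1) m = c₂ := by
  obtain _ | k := m
  · obtain rfl : c₁ = 0 := hz rfl
    have h00 : Y.d 0 (0 - 1) = 0 := Y.shape _ _ (by simp)
    obtain ⟨g, t, h1, h2⟩ := partB w 0 c₂ 0
      (by rw [X.shape 0 (0 - 1) (by simp), comp_zero])
    exact ⟨g, t, by rw [h00, comp_zero], h2⟩
  · exact quasi_lift_succ w k c₁ c₂ h0 hw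

/-- The main degreewise construction step. -/
lemma mainstep {Q R X Y : ChainComplex A ℕ} (j : Q ⟶ R) [Mono j]
    (hcoker : ∀ n : ℕ, Projective (cokernel (j.f n)))
    (w : Y ⟶ X) [QuasiIso w] (F : R ⟶ X) (φ : Q ⟶ Y)
    (lam : Homotopy (φ ≫ w) (j ≫ F))
    (m : ℕ) (v : R.X m ⟶ Y.X (m - 1)) (u : R.X m ⟶ X.X m)
    (h1 : j.f m ≫ v = φ.f m ≫ Y.d m (m - 1))
    (h2 : j.f m ≫ u = φ.f m ≫ w.f m - lam.hom m (m + 1) ≫ X.d (m + 1) m - j.f m ≫ F.f m)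
    (h3 : v ≫ Y.d (m - 1) (m - 1 - 1) = 0)
    (h3' : m = 0 → v = 0)
    (h4 : v ≫ w.f (m - 1) = u ≫ X.d m (m - 1) + F.f m ≫ X.d m (m - 1)) :
    ∃ (g : R.X m ⟶ Y.X m) (t : R.X m ⟶ X.X (m + 1)),
      j.f m ≫ g = φ.f m ∧ j.f m ≫ t = lam.hom m (m + 1) ∧
      g ≫ Y.d m (m - 1) = v ∧ g ≫ w.f m = u + t ≫ X.d (m + 1) m + F.f m := by
  haveI := hcoker m
  set π := cokernel.π (j.f m) with hπdef
  set σ := Projective.factorThru (𝟙 (cokernel (j.f m))) π with hσdef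
  have hσπ : σ ≫ π = 𝟙 _ := Projective.factorThru_comp _ _
  have hkπ : (𝟙 (R.X m) - π ≫ σ) ≫ π = 0 := by
    rw [Preadditive.sub_comp, Category.id_comp, Category.assoc, hσπ, Category.comp_id, sub_self]
  set ρ := Abelian.monoLift (j.f m) _ hkπ with hρdef
  have hρj : ρ ≫ j.f m = 𝟙 (R.X m) - π ≫ σ := Abelian.monoLift_comp _ _ _
  have hjπ : j.f m ≫ π = 0 := cokernel.condition _
  have hjρ : j.f m ≫ ρ = 𝟙 _ := by
    rw [← cancel_mono (j.f m), Category.assoc, hρj, Preadditive.comp_sub, ← Category.assoc,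
      hjπ, zero_comp, sub_zero, Category.comp_id, Category.id_comp]
  have hπσ : π ≫ σ = 𝟙 (R.X m) - ρ ≫ j.f m := by rw [hρj, sub_sub_cancel]
  obtain ⟨gh, th, hgh1, hgh2⟩ := quasi_lift w m (σ ≫ v) (σ ≫ (u + F.f m))
    (by rw [Category.assoc, h3, comp_zero])
    (fun hm => by rw [h3' hm, comp_zero])
    (by rw [Category.assoc, h4, Category.assoc, Preadditive.add_comp])
  refine ⟨ρ ≫ φ.f m + π ≫ gh, ρ ≫ lam.hom m (m + 1) - π ≫ th, ?_, ?_, ?_, ?_⟩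
  · rw [Preadditive.comp_add, ← Category.assoc, ← Category.assoc, hjρ, hjπ, zero_comp,
      add_zero, Category.id_comp]
  · rw [Preadditive.comp_sub, ← Category.assoc, ← Category.assoc, hjρ, hjπ, zero_comp,
      sub_zero, Category.id_comp]
  · rw [Preadditive.add_comp, Category.assoc, Category.assoc, hgh1,
      ← Category.assoc π σ v, hπσ, Preadditive.sub_comp, Category.id_comp,
      Category.assoc ρ (j.f m) v, h1]
    abel
  · have hju : j.f m ≫ (u + F.f m) =
        φ.f m ≫ w.f m - lam.hom m (m + 1) ≫ X.d (m + 1) m := by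
      rw [Preadditive.comp_add, h2]; abel
    have hghw : gh ≫ w.f m = σ ≫ (u + F.f m) - th ≫ X.d (m + 1) m := eq_sub_of_add_eq hgh2
    have key : π ≫ gh ≫ w.f m = (u + F.f m) -
        ρ ≫ (φ.f m ≫ w.f m - lam.hom m (m + 1) ≫ X.d (m + 1) m) -
        π ≫ th ≫ X.d (m + 1) m := by
      rw [hghw, Preadditive.comp_sub, ← Category.assoc π σ (u + F.f m), hπσ,
        Preadditive.sub_comp, Category.id_comp, Category.assoc ρ (j.f m) (u + F.f m), hju]
    rw [Preadditive.add_comp, Category.assoc π gh, key]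
    simp only [Preadditive.comp_sub, Preadditive.sub_comp, Preadditive.add_comp,
      Preadditive.comp_add, Category.assoc]
    abel

/-- A recursion principle producing a function with linked consecutive values. -/
lemma nat_rec_exists {D : ℕ → Sort*} (L : ∀ n, D n → D (n + 1) → Prop) (base : D 0)
    (step : ∀ n (s : D n), ∃ s', L n s s') :
    ∃ f : ∀ n, D n, f 0 = base ∧ ∀ n, L n (f n) (f (n + 1)) :=
  ⟨fun n => Nat.rec base (fun n s => (step n s).choose) n, rfl,
   fun n => (step n _).choose_spec⟩

end LiftingUpToHomotopyAux

open LiftingUpToHomotopyAux in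
/-- Lifting up to homotopy: let `j : Q ⟶ R` be a monomorphism of bounded-below chain
complexes in an abelian category whose cokernel is projective in each degree, let
`w : Y ⟶ X` be a quasi-isomorphism, `F : R ⟶ X` and `φ : Q ⟶ Y` chain maps, and `λ` a
chain homotopy from `w ∘ φ` to `F ∘ j`.  Then there is a chain map `G : R ⟶ Y` with
`G ∘ j = φ` and a chain homotopy `H` from `w ∘ G` to `F` with `H ∘ j = λ`. -/
theorem lifting_up_to_homotopy {A : Type u} [Category.{v} A] [Abelian A]
    (Q R X Y : ChainComplex A ℕ) (j : Q ⟶ R) [Mono j]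
    (hcoker : ∀ n : ℕ, Projective (cokernel (j.f n)))
    (w : Y ⟶ X) [QuasiIso w] (F : R ⟶ X) (φ : Q ⟶ Y)
    (lam : Homotopy (φ ≫ w) (j ≫ F)) :
    ∃ (G : R ⟶ Y), j ≫ G = φ ∧
      ∃ H : Homotopy (G ≫ w) F, ∀ n m : ℕ, j.f n ≫ H.hom n m = lam.hom n m := by
  classical
  -- the invariant carried by the degreewise data
  set Pp : ∀ n : ℕ, (R.X n ⟶ Y.X n) × (R.X n ⟶ X.X (n + 1)) → Prop := fun n p =>
    j.f n ≫ p.1 = φ.f n ∧ j.f n ≫ p.2 = lam.hom n (n + 1) ∧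
    (R.d (n + 1) n ≫ p.1) ≫ Y.d n (n - 1) = 0 ∧
    (R.d (n + 1) n ≫ p.1) ≫ w.f n =
      (R.d (n + 1) n ≫ p.2) ≫ X.d (n + 1) n + F.f (n + 1) ≫ X.d (n + 1) n with hPp
  -- base case
  have hbase : ∃ s : {p : (R.X 0 ⟶ Y.X 0) × (R.X 0 ⟶ X.X 1) // Pp 0 p},
      s.1.1 ≫ w.f 0 = s.1.2 ≫ X.d 1 0 + F.f 0 := by
    have hY0 : Y.d 0 (0 - 1) = 0 := Y.shape _ _ (by simp)
    have hX0 : X.d 0 (0 - 1) = 0 := X.shape _ _ (by simp)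
    have hlam0 := lam.comm 0
    rw [Homotopy.dNext_zero_chainComplex, Homotopy.prevD_chainComplex,
      HomologicalComplex.comp_f, HomologicalComplex.comp_f, zero_add] at hlam0
    obtain ⟨g, t, p1, p2, p3, p4⟩ := mainstep j hcoker w F φ lam 0
      (0 : R.X 0 ⟶ Y.X (0 - 1)) (0 : R.X 0 ⟶ X.X 0)
      (by simp [hY0]) (by rw [comp_zero, hlam0]; abel)
      (by rw [zero_comp]) (fun _ => rfl)
      (by simp [hX0])
    have p4' : g ≫ w.f 0 = t ≫ X.d (0 + 1) 0 + F.f 0 := by rw [p4, zero_add]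
    have hp : Pp 0 (g, t) := by
      simp only [hPp]
      refine ⟨p1, p2, ?_, ?_⟩
      · rw [Category.assoc, hY0, comp_zero, comp_zero]
      · rw [Category.assoc, p4', Preadditive.comp_add,
          ← Category.assoc (R.d (0 + 1) 0) t (X.d (0 + 1) 0),
          HomologicalComplex.Hom.comm F (0 + 1) 0]
    exact ⟨⟨⟨g, t⟩, hp⟩, p4'⟩
  obtain ⟨s0, hc0⟩ := hbase
  -- induction step
  have hstep : ∀ (n : ℕ) (s : {p : (R.X n ⟶ Y.X n) × (R.X n ⟶ X.X (n + 1)) // Pp n p}),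
      ∃ s' : {p : (R.X (n + 1) ⟶ Y.X (n + 1)) × (R.X (n + 1) ⟶ X.X (n + 1 + 1)) //
          Pp (n + 1) p},
        s'.1.1 ≫ Y.d (n + 1) n = R.d (n + 1) n ≫ s.1.1 ∧
        s'.1.1 ≫ w.f (n + 1) =
          R.d (n + 1) n ≫ s.1.2 + s'.1.2 ≫ X.d (n + 1 + 1) (n + 1) + F.f (n + 1) := by
    intro n s
    obtain ⟨⟨g, t⟩, hp⟩ := s
    simp only [hPp] at hp
    obtain ⟨hi1, hi2, hi3, hi4⟩ := hp
    have hlam := lam.comm (n + 1)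
    rw [Homotopy.dNext_succ_chainComplex, Homotopy.prevD_chainComplex,
      HomologicalComplex.comp_f, HomologicalComplex.comp_f] at hlam
    obtain ⟨g', t', p1, p2, p3, p4⟩ := mainstep j hcoker w F φ lam (n + 1)
      (R.d (n + 1) n ≫ g) (R.d (n + 1) n ≫ t)
      (show j.f (n + 1) ≫ (R.d (n + 1) n ≫ g) = φ.f (n + 1) ≫ Y.d (n + 1) n by
        rw [← Category.assoc, HomologicalComplex.Hom.comm j (n + 1) n, Category.assoc,
          hi1, ← HomologicalComplex.Hom.comm φ (n + 1) n])
      (show j.f (n + 1) ≫ (R.d (n + 1) n ≫ t) =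
          φ.f (n + 1) ≫ w.f (n + 1) - lam.hom (n + 1) (n + 1 + 1) ≫ X.d (n + 1 + 1) (n + 1)
            - j.f (n + 1) ≫ F.f (n + 1) by
        rw [← Category.assoc, HomologicalComplex.Hom.comm j (n + 1) n, Category.assoc,
          hi2, hlam]
        abel)
      hi3 (fun h => (Nat.succ_ne_zero n h).elim) hi4
    have hp' : Pp (n + 1) (g', t') := by
      simp only [hPp]
      refine ⟨p1, p2, ?_, ?_⟩
      · rw [Category.assoc, p3, ← Category.assoc, HomologicalComplex.d_comp_d, zero_comp]
      · rw [Category.assoc, p4, Preadditive.comp_add, Preadditive.comp_add,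
          ← Category.assoc (R.d (n + 1 + 1) (n + 1)) (R.d (n + 1) n) t,
          HomologicalComplex.d_comp_d, zero_comp, zero_add,
          HomologicalComplex.Hom.comm F (n + 1 + 1) (n + 1),
          ← Category.assoc (R.d (n + 1 + 1) (n + 1)) t' (X.d (n + 1 + 1) (n + 1))]
    exact ⟨⟨⟨g', t'⟩, hp'⟩, p3, p4⟩
  obtain ⟨f, hf0, hfL⟩ := nat_rec_exists
    (D := fun n => {p : (R.X n ⟶ Y.X n) × (R.X n ⟶ X.X (n + 1)) // Pp n p})
    (fun n s s' =>
      s'.1.1 ≫ Y.d (n + 1) n = R.d (n + 1) n ≫ s.1.1 ∧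
      s'.1.1 ≫ w.f (n + 1) =
        R.d (n + 1) n ≫ s.1.2 + s'.1.2 ≫ X.d (n + 1 + 1) (n + 1) + F.f (n + 1)) s0 hstep
  have hinv : ∀ n, j.f n ≫ (f n).1.1 = φ.f n ∧ j.f n ≫ (f n).1.2 = lam.hom n (n + 1) := by
    intro n
    have hp := (f n).2
    simp only [hPp] at hp
    exact ⟨hp.1, hp.2.1⟩
  have hc0' : (f 0).1.1 ≫ w.f 0 = (f 0).1.2 ≫ X.d 1 0 + F.f 0 := by rw [hf0]; exact hc0
  -- the chain map G
  refine ⟨{ f := fun n => (f n).1.1, comm' := ?_ }, ?_, ?_⟩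
  · intro i i' hii'
    obtain rfl : i' + 1 = i := by simpa using hii'
    exact (hfL i').1
  · ext n
    exact (hinv n).1
  -- the homotopy H
  · refine ⟨⟨fun i i' =>
        (if h : i + 1 = i' then (f i).1.2 ≫ eqToHom (congrArg X.X h) else 0),
      fun i i' h => dif_neg (fun e => h (by simpa using e)), ?_⟩, ?_⟩
    · intro i
      rw [Homotopy.prevD_chainComplex]
      cases i with
      | zero =>
        rw [Homotopy.dNext_zero_chainComplex, zero_add]
        simpa using hc0'
      | succ k =>
        rw [Homotopy.dNext_succ_chainComplex]
        simpa using (hfL k).2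
    · intro n m
      by_cases h : n + 1 = m
      · subst h
        simpa using (hinv n).2
      · dsimp only
        rw [dif_neg h, comp_zero, lam.zero n m (fun e => h (by simpa using e))]
end

section
/- Let A be an abelian category with enough projectives and FC₊(A) the category of filtered bounded-below chain complexes (X, W) with W an increasing, bounded-below, biregular filtration. Then for every object (X, W) of FC₊(A) there exists a filtered quasi-isomorphism ε : P → X where (P, W) is a filtered complex such that each graded piece Gr^W_p P is projective in every degree. -/
/-!
Index the filtration from its lower bound `p₀`, so that stage `k` is `W_{p₀+k} X` and stage `0`
vanishes. The resolution is built degree by degree, for all stages at once. In degree `n + 1` and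
stage `k` the new generators must map onto the pullback of the pairs `(c, z)`, with `c` a chain of
`W_{p₀+k} X` of degree `n + 1` and `z` a cycle of the resolution of degree `n` such that
`d c = ε z`; this is what makes `ε` a quasi-isomorphism at every stage. These pullbacks form a
tower along the filtration, which is covered by a tower of split monomorphisms with projective
cokernels, adding a projective cover at each step until biregularity makes the tower constant.
So in each degree the stages eventually stop growing: their colimit is the total complex, filtered
by the stages, and its graded pieces are the projective cokernels.
-/

open CategoryTheory CategoryTheory.Limits

universe v u

variable (A : Type u) [Category.{v} A] [Abelian A]

/-- A filtered bounded-below chain complex `(X, W)`: a bounded-below chain complex `X`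
(modelled as an `ℕ`-indexed chain complex) together with an increasing filtration by
subcomplexes `W p ⟶ X`, which is bounded below (`W p = 0` for `p ≪ 0`) and biregular
(in each degree `n`, `W p` exhausts `X` in degree `n` for `p ≫ 0`). -/
structure FilteredComplex where
  X : ChainComplex A ℕ
  W : ℤ → ChainComplex A ℕ
  ι : ∀ p : ℤ, W p ⟶ W (p + 1)
  mono_ι : ∀ p : ℤ, Mono (ι p)
  toX : ∀ p : ℤ, W p ⟶ X
  mono_toX : ∀ p : ℤ, Mono (toX p)
  compat : ∀ p : ℤ, ι p ≫ toX (p + 1) = toX p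
  bounded_below : ∃ p₀ : ℤ, ∀ p ≤ p₀, ∀ n : ℕ, IsZero ((W p).X n)
  biregular : ∀ n : ℕ, ∃ p : ℤ, IsIso ((toX p).f n)

variable {A}

/-- A filtered morphism between filtered complexes: a chain map together with compatible
maps on each filtration step. -/
structure FilteredHom (P Q : FilteredComplex A) where
  f : P.X ⟶ Q.X
  lift : ∀ p : ℤ, P.W p ⟶ Q.W p
  comm_toX : ∀ p : ℤ, lift p ≫ Q.toX p = P.toX p ≫ f
  comm_ι : ∀ p : ℤ, lift p ≫ Q.ι p = P.ι p ≫ lift (p + 1)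

/-- A filtered morphism is a filtered quasi-isomorphism if `W_p(f)` is a
quasi-isomorphism for each `p`. -/
def FilteredHom.IsFilteredQuasiIso {P Q : FilteredComplex A} (φ : FilteredHom P Q) : Prop :=
  ∀ p : ℤ, QuasiIso (φ.lift p)

/-- The graded piece `Gr^W_p` in degree `n`: the cokernel of the inclusion
`W_{p-1} ⟶ W_p` in degree `n`. -/
noncomputable def FilteredComplex.gr (P : FilteredComplex A) (p : ℤ) (n : ℕ) : A :=
  cokernel ((P.ι (p - 1)).f n)

namespace HomologicalComplex

variable {C ι : Type*} [Category C] [Abelian C] {c : ComplexShape ι}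

lemma isZero_of_isZero_X (K : HomologicalComplex C c) (h : ∀ i, IsZero (K.X i)) : IsZero K :=
  (IsZero.iff_id_eq_zero K).2 (by ext i; exact (h i).eq_of_src _ _)

lemma toCycles_cyclesMap {K L : HomologicalComplex C c} (φ : K ⟶ L) (i j : ι) :
    K.toCycles i j ≫ cyclesMap φ j = φ.f i ≫ L.toCycles i j := by
  rw [← cancel_mono (L.iCycles j)]
  simp

end HomologicalComplex

namespace CategoryTheory.Functor

variable {C : Type*} [Category C]

lemma map_homOfLE_mem (F : ℕ ⥤ C) (P : MorphismProperty C) [P.IsMultiplicative]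
    {i j : ℕ} (hij : i ≤ j) (hP : ∀ k, i ≤ k → k < j → P (F.map (homOfLE k.le_succ))) :
    P (F.map (homOfLE hij)) := by
  induction j, hij using Nat.le_induction with
  | base => simpa using P.id_mem (F.obj i)
  | succ j hij ih =>
    rw [← homOfLE_comp hij j.le_succ, F.map_comp]
    exact P.comp_mem _ _ (ih fun k hik hkj => hP k hik (by omega)) (hP j hij (by omega))

lemma isEventuallyConstantFrom_of_isIso_map_succ (F : ℕ ⥤ C) {m : ℕ}
    (h : ∀ k, m ≤ k → IsIso (F.map (homOfLE k.le_succ))) : F.IsEventuallyConstantFrom m :=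
  fun _ f => F.map_homOfLE_mem (.isomorphisms C) (leOfHom f) fun k hk _ => h k hk

lemma IsEventuallyConstantFrom.mono_ι {F : ℕ ⥤ C} {m : ℕ} (hF : F.IsEventuallyConstantFrom m)
    (hmono : ∀ k : ℕ, Mono (F.map (homOfLE k.le_succ))) {c : Cocone F} (hc : IsColimit c)
    (k : ℕ) : Mono (c.ι.app k) := by
  have : IsIso (c.ι.app (max k m)) := hF.isIso_ι_of_isColimit' hc _ (homOfLE (le_max_right k m))
  have : Mono (F.map (homOfLE (le_max_left k m))) :=
    F.map_homOfLE_mem (.monomorphisms C) _ fun k _ _ => hmono k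
  rw [← c.w (homOfLE (le_max_left k m))]
  infer_instance

end CategoryTheory.Functor

namespace ChainComplex

open Abelian Pseudoelement

attribute [local instance] Abelian.Pseudoelement.objectToSort Abelian.Pseudoelement.homToFun

variable {C : Type*} [Category C] [Abelian C]

lemma next_eq_sub_one (n : ℕ) : (ComplexShape.down ℕ).next n = n - 1 := by
  cases n
  · exact next_nat_zero
  · exact next_nat_succ _

lemma exact_iCycles_d (K : ChainComplex C ℕ) (n : ℕ) :
    (ShortComplex.mk (K.iCycles n) (K.d n (n - 1)) (K.iCycles_d n (n - 1))).Exact :=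
  ShortComplex.exact_of_f_is_kernel _ (K.cyclesIsKernel n (n - 1) (next_eq_sub_one n))

lemma exact_toCycles_homologyπ (K : ChainComplex C ℕ) (n : ℕ) :
    (ShortComplex.mk (K.toCycles (n + 1) n) (K.homologyπ n)
      (K.toCycles_comp_homologyπ (n + 1) n)).Exact :=
  ShortComplex.exact_of_g_is_cokernel _ (K.homologyIsCokernel (n + 1) n (prev ℕ n))

variable {K L : ChainComplex C ℕ} (φ : K ⟶ L)

/-- Every cycle `(z, c)` of the mapping cone of `φ` is the boundary of some `(w, 0)`. -/
def LiftsBoundaries : Prop :=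
  ∀ (n : ℕ) (c : L.X (n + 1)) (z : K.X n),
    K.d n (n - 1) z = 0 → φ.f n z = L.d (n + 1) n c →
    ∃ w : K.X (n + 1), φ.f (n + 1) w = c ∧ K.d (n + 1) n w = z

variable {φ}

lemma epi_cyclesMap_zero [Epi (φ.f 0)] : Epi (HomologicalComplex.cyclesMap φ 0) := by
  have := K.isIso_iCycles 0 0 next_nat_zero (K.shape _ _ (by simp))
  have := L.isIso_iCycles 0 0 next_nat_zero (L.shape _ _ (by simp))
  have : Epi (HomologicalComplex.cyclesMap φ 0 ≫ L.iCycles 0) := by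
    rw [HomologicalComplex.cyclesMap_i]
    infer_instance
  exact (epi_comp_iff_of_isIso _ _).mp this

lemma LiftsBoundaries.epi_cyclesMap_succ (hφ : LiftsBoundaries φ) (n : ℕ) :
    Epi (HomologicalComplex.cyclesMap φ (n + 1)) := by
  refine epi_of_pseudo_surjective _ fun y => ?_
  obtain ⟨w, hw, hdw⟩ := hφ n (L.iCycles (n + 1) y) 0 (apply_zero _) (by
    rw [apply_zero, ← Pseudoelement.comp_apply, L.iCycles_d, Pseudoelement.zero_apply])
  obtain ⟨x, hx⟩ := pseudo_exact_of_exact (K.exact_iCycles_d (n + 1)) w hdw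
  refine ⟨x, pseudo_injective_of_mono (L.iCycles (n + 1)) ?_⟩
  rw [← Pseudoelement.comp_apply, HomologicalComplex.cyclesMap_i, Pseudoelement.comp_apply]
  exact (congrArg _ hx).trans hw

lemma LiftsBoundaries.mono_homologyMap (hφ : LiftsBoundaries φ) (n : ℕ) :
    Mono (HomologicalComplex.homologyMap φ n) := by
  refine mono_of_zero_of_map_zero _ fun a ha => ?_
  obtain ⟨z, rfl⟩ := pseudo_surjective_of_epi (K.homologyπ n) a
  have hz : L.homologyπ n (HomologicalComplex.cyclesMap φ n z) = 0 := by
    rw [← Pseudoelement.comp_apply, ← HomologicalComplex.homologyπ_naturality,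
      Pseudoelement.comp_apply, ha]
  obtain ⟨c, hc⟩ := pseudo_exact_of_exact (L.exact_toCycles_homologyπ n) _ hz
  obtain ⟨w, -, hdw⟩ := hφ n c (K.iCycles n z)
    (by rw [← Pseudoelement.comp_apply, K.iCycles_d, Pseudoelement.zero_apply])
    (by rw [← Pseudoelement.comp_apply, ← HomologicalComplex.cyclesMap_i,
      Pseudoelement.comp_apply, ← hc, ← Pseudoelement.comp_apply, L.toCycles_i])
  have hw : K.toCycles (n + 1) n w = z := pseudo_injective_of_mono (K.iCycles n) (by
    rw [← Pseudoelement.comp_apply, K.toCycles_i, hdw])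
  rw [← hw, ← Pseudoelement.comp_apply, K.toCycles_comp_homologyπ, Pseudoelement.zero_apply]

lemma LiftsBoundaries.quasiIso [Epi (φ.f 0)] (hφ : LiftsBoundaries φ) : QuasiIso φ := by
  rw [quasiIso_iff]
  intro n
  rw [quasiIsoAt_iff_isIso_homologyMap]
  have : Epi (HomologicalComplex.cyclesMap φ n) := by
    cases n
    · exact epi_cyclesMap_zero
    · exact hφ.epi_cyclesMap_succ _
  have : Epi (HomologicalComplex.homologyMap φ n) :=
    epi_of_epi_fac (HomologicalComplex.homologyπ_naturality φ n)
  have := hφ.mono_homologyMap n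
  exact isIso_of_mono_of_epi _

end ChainComplex

namespace CategoryTheory

variable {C : Type*} [Category C] [Abelian C]

structure EpiCover (B : C) where
  obj : C
  π : obj ⟶ B
  epi_π : Epi π

structure EpiCover.Extension {B B' : C} (P : EpiCover B) (β : B ⟶ B') where
  cover : EpiCover B'
  ι : P.obj ⟶ cover.obj
  ι_π : ι ≫ cover.π = P.π ≫ β
  mono_ι : Mono ι
  projective_cokernel_ι : Projective (cokernel ι)

namespace EpiCover

variable {B B' : C} (P : EpiCover B) (β : B ⟶ B')

def extendOfIsIso [IsIso β] : P.Extension β where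
  cover := ⟨P.obj, P.π ≫ β, have := P.epi_π; epi_comp _ _⟩
  ι := 𝟙 _
  ι_π := Category.id_comp _
  mono_ι := inferInstance
  projective_cokernel_ι := (isZero_cokernel_of_epi _).projective

noncomputable def extendByProjective [EnoughProjectives C] : P.Extension β where
  cover := ⟨P.obj ⊞ Projective.over B', biprod.desc (P.π ≫ β) (Projective.π B'),
    epi_of_epi_fac (biprod.inr_desc _ _)⟩
  ι := biprod.inl
  ι_π := biprod.inl_desc _ _
  mono_ι := inferInstance
  projective_cokernel_ι := Projective.of_iso cokernelBiprodInlIso.symm inferInstance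

end EpiCover

structure ProjectiveTowerCover (B : ℕ → C) (β : ∀ k, B k ⟶ B (k + 1)) (m : ℕ) where
  obj : ℕ → C
  map : ∀ k, obj k ⟶ obj (k + 1)
  π : ∀ k, obj k ⟶ B k
  epi_π : ∀ k, Epi (π k)
  map_π : ∀ k, map k ≫ π (k + 1) = π k ≫ β k
  isZero_obj_zero : IsZero (obj 0)
  mono_map : ∀ k, Mono (map k)
  projective_cokernel_map : ∀ k, Projective (cokernel (map k))
  isIso_map : ∀ k, m ≤ k → IsIso (map k)

namespace ProjectiveTowerCover

variable [EnoughProjectives C] {B : ℕ → C} (β : ∀ k, B k ⟶ B (k + 1)) {m : ℕ}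
  (hβ : ∀ k, m ≤ k → IsIso (β k))

/-- Stopping once `β` is invertible makes the tower stationary from `m` on. -/
noncomputable def step (k : ℕ) (P : EpiCover (B k)) : P.Extension (β k) :=
  if h : m ≤ k then haveI := hβ k h; P.extendOfIsIso (β k) else P.extendByProjective (β k)

lemma isIso_step_ι {k : ℕ} (hk : m ≤ k) (P : EpiCover (B k)) : IsIso (step β hβ k P).ι := by
  rw [step, dif_pos hk]
  exact inferInstanceAs (IsIso (𝟙 _))

noncomputable def covers : ∀ k, EpiCover (B k)
  | 0 => ⟨B 0, 𝟙 _, inferInstance⟩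
  | k + 1 => (step β hβ k (covers k)).cover

noncomputable def ofEnoughProjectives (hB : IsZero (B 0)) : ProjectiveTowerCover B β m where
  obj k := (covers β hβ k).obj
  map k := (step β hβ k (covers β hβ k)).ι
  π k := (covers β hβ k).π
  epi_π k := (covers β hβ k).epi_π
  map_π k := (step β hβ k _).ι_π
  isZero_obj_zero := hB
  mono_map k := (step β hβ k _).mono_ι
  projective_cokernel_map k := (step β hβ k _).projective_cokernel_ι
  isIso_map _ hk := isIso_step_ι β hβ hk _

end ProjectiveTowerCover

end CategoryTheory

namespace FilteredComplex

variable (X : FilteredComplex A)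

noncomputable def lowerBound : ℤ := X.bounded_below.choose

lemma isZero_W_X_of_le {p : ℤ} (hp : p ≤ X.lowerBound) (n : ℕ) : IsZero ((X.W p).X n) :=
  X.bounded_below.choose_spec p hp n

lemma ι_f_toX_f (p : ℤ) (n : ℕ) : (X.ι p).f n ≫ (X.toX (p + 1)).f n = (X.toX p).f n := by
  rw [← HomologicalComplex.comp_f, X.compat]

lemma isIso_toX_f_of_le {p q : ℤ} (hpq : p ≤ q) {n : ℕ} (h : IsIso ((X.toX p).f n)) :
    IsIso ((X.toX q).f n) := by
  induction q, hpq using Int.leInduction with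
  | base => exact h
  | succ q _ ih =>
    have := X.mono_toX (q + 1)
    have : Epi ((X.ι q).f n ≫ (X.toX (q + 1)).f n) := by rw [ι_f_toX_f]; infer_instance
    have := epi_of_epi ((X.ι q).f n) ((X.toX (q + 1)).f n)
    exact isIso_of_mono_of_epi _

lemma isIso_ι_f {p : ℤ} {n : ℕ} (h : IsIso ((X.toX p).f n)) : IsIso ((X.ι p).f n) :=
  have := X.isIso_toX_f_of_le (Int.le_add_one le_rfl) h
  IsIso.of_isIso_fac_right (X.ι_f_toX_f p n)

noncomputable abbrev stage (k : ℕ) : ChainComplex A ℕ := X.W (X.lowerBound + k)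

lemma eqToHom_comp_toX {p q : ℤ} (h : p = q) :
    eqToHom (congrArg X.W h) ≫ X.toX q = X.toX p := by
  subst h
  exact Category.id_comp _

noncomputable def stageMap (k : ℕ) : X.stage k ⟶ X.stage (k + 1) :=
  X.ι _ ≫ eqToHom (congrArg X.W (by push_cast; ring))

lemma stageMap_toX (k : ℕ) :
    X.stageMap k ≫ X.toX (X.lowerBound + (k + 1 : ℕ)) = X.toX (X.lowerBound + k) := by
  rw [stageMap, Category.assoc, eqToHom_comp_toX _ (by push_cast; ring), X.compat]

lemma isZero_stage_zero_X (n : ℕ) : IsZero ((X.stage 0).X n) :=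
  X.isZero_W_X_of_le (by simp) n

noncomputable def stableStage : ℕ → ℕ
  | 0 => ((X.biregular 0).choose - X.lowerBound).toNat
  | n + 1 => max (stableStage n) (((X.biregular (n + 1)).choose - X.lowerBound).toNat)

lemma stableStage_mono : Monotone X.stableStage :=
  monotone_nat_of_le_succ fun _ => le_max_left _ _

lemma isIso_toX_f_of_stableStage_le {n k : ℕ} (hk : X.stableStage n ≤ k) :
    IsIso ((X.toX (X.lowerBound + k)).f n) := by
  refine X.isIso_toX_f_of_le ?_ (X.biregular n).choose_spec
  have : ((X.biregular n).choose - X.lowerBound).toNat ≤ X.stableStage n := by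
    cases n
    · exact le_rfl
    · exact le_max_right _ _
  omega

lemma isIso_stageMap_f {n k : ℕ} (hk : X.stableStage n ≤ k) : IsIso ((X.stageMap k).f n) := by
  have := X.isIso_ι_f (X.isIso_toX_f_of_stableStage_le hk)
  rw [stageMap, HomologicalComplex.comp_f, HomologicalComplex.eqToHom_f]
  infer_instance

lemma mono_stageMap_f (k n : ℕ) : Mono ((X.stageMap k).f n) := by
  have := X.mono_ι (X.lowerBound + k)
  rw [stageMap, HomologicalComplex.comp_f, HomologicalComplex.eqToHom_f]
  infer_instance

lemma isIso_cyclesMap_stageMap {n k : ℕ} (hk : X.stableStage n ≤ k) :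
    IsIso (HomologicalComplex.cyclesMap (X.stageMap k) n) :=
  ShortComplex.isIso_cyclesMap_of_isIso_of_mono' _ (X.isIso_stageMap_f hk)
    (X.mono_stageMap_f k _)

/-- Degree `n` of the resolution at all stages `k` at once. `Z k ⊆ P k` stands for the cycles:
it becomes the kernel of the differential once degree `n + 1` is built. -/
structure Level (n : ℕ) where
  P : ℕ → A
  j : ∀ k, P k ⟶ P (k + 1)
  e : ∀ k, P k ⟶ (X.stage k).X n
  Z : ℕ → A
  iZ : ∀ k, Z k ⟶ P k
  jZ : ∀ k, Z k ⟶ Z (k + 1)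
  j_e : ∀ k, j k ≫ e (k + 1) = e k ≫ (X.stageMap k).f n
  jZ_iZ : ∀ k, jZ k ≫ iZ (k + 1) = iZ k ≫ j k
  iZ_e_d : ∀ k, iZ k ≫ e k ≫ (X.stage k).d n (n - 1) = 0
  isZero_P : IsZero (P 0)
  mono_iZ : ∀ k, Mono (iZ k)
  mono_j : ∀ k, Mono (j k)
  projective_cokernel_j : ∀ k, Projective (cokernel (j k))
  isIso_j : ∀ k, X.stableStage n ≤ k → IsIso (j k)
  isIso_jZ : ∀ k, X.stableStage n ≤ k → IsIso (jZ k)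

namespace Level

variable {X} {n : ℕ} (s : X.Level n)

noncomputable def eCycles (k : ℕ) : s.Z k ⟶ (X.stage k).cycles n :=
  (X.stage k).liftCycles (s.iZ k ≫ s.e k) (n - 1) (ChainComplex.next_eq_sub_one n)
    (by rw [Category.assoc, s.iZ_e_d])

lemma eCycles_iCycles (k : ℕ) : s.eCycles k ≫ (X.stage k).iCycles n = s.iZ k ≫ s.e k :=
  HomologicalComplex.liftCycles_i _ _ _ _ _

lemma jZ_eCycles (k : ℕ) :
    s.jZ k ≫ s.eCycles (k + 1) =
      s.eCycles k ≫ HomologicalComplex.cyclesMap (X.stageMap k) n := by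
  rw [← cancel_mono ((X.stage (k + 1)).iCycles n), Category.assoc, eCycles_iCycles,
    Category.assoc, HomologicalComplex.cyclesMap_i, reassoc_of% s.eCycles_iCycles,
    reassoc_of% s.jZ_iZ, s.j_e]

/-- The pairs `(c, z)` with `d c = e z` that the generators of degree `n + 1` must cover. -/
noncomputable abbrev boundaryPairs (k : ℕ) : A :=
  pullback ((X.stage k).toCycles (n + 1) n) (s.eCycles k)

noncomputable def boundaryPairsMap (k : ℕ) : s.boundaryPairs k ⟶ s.boundaryPairs (k + 1) :=
  pullback.map _ _ _ _ ((X.stageMap k).f (n + 1)) (s.jZ k)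
    (HomologicalComplex.cyclesMap (X.stageMap k) n)
    (HomologicalComplex.toCycles_cyclesMap _ _ _) (s.jZ_eCycles k).symm

lemma isZero_boundaryPairs_zero : IsZero (s.boundaryPairs 0) := by
  have := s.mono_iZ 0
  rw [IsZero.iff_id_eq_zero]
  apply pullback.hom_ext
  · exact (X.isZero_stage_zero_X _).eq_of_tgt _ _
  · exact (IsZero.of_mono (s.iZ 0) s.isZero_P).eq_of_tgt _ _

lemma isIso_boundaryPairsMap {k : ℕ} (hk : X.stableStage (n + 1) ≤ k) :
    IsIso (s.boundaryPairsMap k) := by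
  have hk' := (X.stableStage_mono n.le_succ).trans hk
  have := X.isIso_stageMap_f hk
  have := s.isIso_jZ k hk'
  have := X.isIso_cyclesMap_stageMap hk'
  dsimp only [boundaryPairsMap]
  infer_instance

variable [EnoughProjectives A]

noncomputable def cover :
    ProjectiveTowerCover s.boundaryPairs s.boundaryPairsMap (X.stableStage (n + 1)) :=
  .ofEnoughProjectives _ (fun _ hk => s.isIso_boundaryPairsMap hk) s.isZero_boundaryPairs_zero

noncomputable def nextE (k : ℕ) : s.cover.obj k ⟶ (X.stage k).X (n + 1) :=
  s.cover.π k ≫ pullback.fst _ _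

noncomputable def dZ (k : ℕ) : s.cover.obj k ⟶ s.Z k :=
  s.cover.π k ≫ pullback.snd _ _

lemma nextE_toCycles (k : ℕ) :
    s.nextE k ≫ (X.stage k).toCycles (n + 1) n = s.dZ k ≫ s.eCycles k := by
  simp only [nextE, dZ, Category.assoc, pullback.condition]

lemma dZ_iZ_e (k : ℕ) : s.dZ k ≫ s.iZ k ≫ s.e k = s.nextE k ≫ (X.stage k).d (n + 1) n := by
  rw [← eCycles_iCycles, ← reassoc_of% s.nextE_toCycles, HomologicalComplex.toCycles_i]

lemma j_nextE (k : ℕ) :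
    s.cover.map k ≫ s.nextE (k + 1) = s.nextE k ≫ (X.stageMap k).f (n + 1) := by
  rw [nextE, reassoc_of% s.cover.map_π, boundaryPairsMap, pullback.lift_fst, nextE,
    Category.assoc]

lemma j_dZ (k : ℕ) : s.cover.map k ≫ s.dZ (k + 1) = s.dZ k ≫ s.jZ k := by
  rw [dZ, reassoc_of% s.cover.map_π, boundaryPairsMap, pullback.lift_snd, dZ, Category.assoc]

noncomputable abbrev next : X.Level (n + 1) where
  P := s.cover.obj
  j := s.cover.map
  e := s.nextE
  Z k := kernel (s.dZ k)
  iZ k := kernel.ι _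
  jZ k := kernel.map _ _ (s.cover.map k) (s.jZ k) (s.j_dZ k).symm
  j_e := s.j_nextE
  jZ_iZ k := kernel.lift_ι _ _ _
  iZ_e_d k := by
    rw [show n + 1 - 1 = n from rfl, ← dZ_iZ_e, kernel.condition_assoc, zero_comp]
  isZero_P := s.cover.isZero_obj_zero
  mono_iZ k := inferInstance
  mono_j := s.cover.mono_map
  projective_cokernel_j := s.cover.projective_cokernel_map
  isIso_j := s.cover.isIso_map
  isIso_jZ k hk :=
    have := s.cover.isIso_map k hk
    have := s.isIso_jZ k ((X.stableStage_mono n.le_succ).trans hk)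
    inferInstance

noncomputable def d (k : ℕ) : s.next.P k ⟶ s.P k := s.dZ k ≫ s.iZ k

lemma d_d (k : ℕ) : s.next.d k ≫ s.d k = 0 := by
  rw [d, d, Category.assoc, kernel.condition_assoc, zero_comp, comp_zero]

lemma j_d (k : ℕ) : s.next.j k ≫ s.d (k + 1) = s.d k ≫ s.j k := by
  rw [d, d, reassoc_of% s.j_dZ, s.jZ_iZ, Category.assoc]

lemma d_e (k : ℕ) : s.d k ≫ s.e k = s.next.e k ≫ (X.stage k).d (n + 1) n := by
  rw [d, Category.assoc, dZ_iZ_e]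

section ElementChase

open Abelian Pseudoelement

attribute [local instance] Abelian.Pseudoelement.objectToSort Abelian.Pseudoelement.homToFun

lemma exists_nextE_dZ (k : ℕ) (c : (X.stage k).X (n + 1)) (y : s.Z k)
    (h : (X.stage k).d (n + 1) n c = s.e k (s.iZ k y)) :
    ∃ w, s.nextE k w = c ∧ s.dZ k w = y := by
  have hcy : (X.stage k).toCycles (n + 1) n c = s.eCycles k y := by
    apply pseudo_injective_of_mono ((X.stage k).iCycles n)
    rw [← Pseudoelement.comp_apply, HomologicalComplex.toCycles_i, h,
      ← Pseudoelement.comp_apply, ← Pseudoelement.comp_apply, eCycles_iCycles]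
  obtain ⟨p, hp₁, hp₂⟩ := pseudo_pullback hcy
  have := s.cover.epi_π k
  obtain ⟨w, rfl⟩ := pseudo_surjective_of_epi (s.cover.π k) p
  exact ⟨w, by rw [nextE, Pseudoelement.comp_apply, hp₁],
    by rw [dZ, Pseudoelement.comp_apply, hp₂]⟩

lemma exists_next_iZ_apply_eq (k : ℕ) (z : s.next.P k) (hz : s.d k z = 0) :
    ∃ y, s.next.iZ k y = z := by
  have := s.mono_iZ k
  have hdz : s.dZ k z = 0 := zero_of_map_zero _ (pseudo_injective_of_mono (s.iZ k)) _
    ((Pseudoelement.comp_apply _ _ z).symm.trans hz)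
  exact pseudo_exact_of_exact (ShortComplex.exact_of_f_is_kernel
    (.mk _ _ (kernel.condition (s.dZ k))) (kernelIsKernel _)) z hdz

end ElementChase

end Level

variable [EnoughProjectives A]

noncomputable def baseCover : ProjectiveTowerCover (fun k => (X.stage k).X 0)
    (fun k => (X.stageMap k).f 0) (X.stableStage 0) :=
  .ofEnoughProjectives _ (fun _ hk => X.isIso_stageMap_f hk) (X.isZero_stage_zero_X 0)

noncomputable def baseLevel : X.Level 0 where
  P := X.baseCover.obj
  j := X.baseCover.map
  e := X.baseCover.π
  Z := X.baseCover.obj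
  iZ _ := 𝟙 _
  jZ := X.baseCover.map
  j_e := X.baseCover.map_π
  jZ_iZ _ := by simp
  iZ_e_d k := by rw [(X.stage k).shape 0 (0 - 1) (by simp), comp_zero, comp_zero]
  isZero_P := X.baseCover.isZero_obj_zero
  mono_iZ _ := inferInstance
  mono_j := X.baseCover.mono_map
  projective_cokernel_j := X.baseCover.projective_cokernel_map
  isIso_j := X.baseCover.isIso_map
  isIso_jZ := X.baseCover.isIso_map

noncomputable def level : ∀ n, X.Level n
  | 0 => X.baseLevel
  | n + 1 => (level n).next

noncomputable def resolutionStage (k : ℕ) : ChainComplex A ℕ :=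
  ChainComplex.of (fun n => (X.level n).P k) (fun n => (X.level n).d k)
    fun n => (X.level n).d_d k

lemma resolutionStage_d (n k : ℕ) : (X.resolutionStage k).d (n + 1) n = (X.level n).d k :=
  ChainComplex.of_d (V := A) (fun n => (X.level n).P k) (fun n => (X.level n).d k) n

noncomputable def resolutionMap (k : ℕ) : X.resolutionStage k ⟶ X.resolutionStage (k + 1) :=
  ChainComplex.ofHom (fun n => (X.level n).j k) fun n => by
    rw [resolutionStage_d, resolutionStage_d]
    exact (X.level n).j_d k

noncomputable def resolutionFunctor : ℕ ⥤ ChainComplex A ℕ :=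
  Functor.ofSequence X.resolutionMap

lemma resolutionFunctor_map_succ (k : ℕ) :
    X.resolutionFunctor.map (homOfLE k.le_succ) = X.resolutionMap k :=
  Functor.ofSequence_map_homOfLE_succ _ k

lemma resolutionFunctor_obj_d (n k : ℕ) :
    (X.resolutionFunctor.obj k).d (n + 1) n = (X.level n).d k :=
  X.resolutionStage_d n k

noncomputable def augment (k : ℕ) : X.resolutionFunctor.obj k ⟶ X.stage k :=
  ChainComplex.ofHom (fun n => (X.level n).e k) fun n => by
    rw [resolutionFunctor_obj_d]
    exact ((X.level n).d_e k).symm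

lemma resolutionFunctor_map_augment (k : ℕ) :
    X.resolutionFunctor.map (homOfLE k.le_succ) ≫ X.augment (k + 1) =
      X.augment k ≫ X.stageMap k := by
  ext n
  rw [HomologicalComplex.comp_f, HomologicalComplex.comp_f, resolutionFunctor_map_succ]
  exact (X.level n).j_e k

section ElementChase

open Abelian Pseudoelement

attribute [local instance] Abelian.Pseudoelement.objectToSort Abelian.Pseudoelement.homToFun

lemma exists_iZ_apply_eq {n k : ℕ} (z : (X.resolutionFunctor.obj k).X n)
    (hz : (X.resolutionFunctor.obj k).d n (n - 1) z = 0) : ∃ y, (X.level n).iZ k y = z := by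
  cases n with
  | zero =>
    have : Epi ((X.level 0).iZ k) := by change Epi (𝟙 _); infer_instance
    exact pseudo_surjective_of_epi ((X.level 0).iZ k) z
  | succ n =>
    rw [show n + 1 - 1 = n from rfl, resolutionFunctor_obj_d] at hz
    exact (X.level n).exists_next_iZ_apply_eq k z hz

lemma liftsBoundaries_augment (k : ℕ) : ChainComplex.LiftsBoundaries (X.augment k) := by
  intro n c z hz hez
  obtain ⟨y, rfl⟩ := X.exists_iZ_apply_eq z hz
  obtain ⟨w, hw, hdw⟩ := (X.level n).exists_nextE_dZ k c y hez.symm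
  refine ⟨w, hw, ?_⟩
  rw [resolutionFunctor_obj_d, ← hdw]
  exact Pseudoelement.comp_apply _ _ w

end ElementChase

instance quasiIso_augment (k : ℕ) : QuasiIso (X.augment k) :=
  have : Epi ((X.augment k).f 0) := X.baseCover.epi_π k
  (X.liftsBoundaries_augment k).quasiIso

lemma mono_resolutionFunctor_map {a b : ℕ} (h : a ≤ b) :
    Mono (X.resolutionFunctor.map (homOfLE h)) :=
  Functor.map_homOfLE_mem _ (.monomorphisms _) h fun k _ _ => by
    rw [resolutionFunctor_map_succ]
    exact HomologicalComplex.mono_of_mono_f _ fun n => (X.level n).mono_j k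

lemma isEventuallyConstantFrom_resolutionFunctor (n : ℕ) :
    (X.resolutionFunctor ⋙ HomologicalComplex.eval A _ n).IsEventuallyConstantFrom
      (X.stableStage n) :=
  Functor.isEventuallyConstantFrom_of_isIso_map_succ _ fun k hk => by
    rw [Functor.comp_map, resolutionFunctor_map_succ]
    exact (X.level n).isIso_j k hk

instance (n : ℕ) : HasColimit (X.resolutionFunctor ⋙ HomologicalComplex.eval A _ n) :=
  (X.isEventuallyConstantFrom_resolutionFunctor n).hasColimit

lemma isIso_colimit_ι_f {n k : ℕ} (hk : X.stableStage n ≤ k) :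
    IsIso ((colimit.ι X.resolutionFunctor k).f n) :=
  (X.isEventuallyConstantFrom_resolutionFunctor n).isIso_ι_of_isColimit'
    (isColimitOfPreserves (HomologicalComplex.eval A _ n) (colimit.isColimit _)) k (homOfLE hk)

lemma mono_colimit_ι (k : ℕ) : Mono (colimit.ι X.resolutionFunctor k) :=
  HomologicalComplex.mono_of_mono_f _ fun n =>
    (X.isEventuallyConstantFrom_resolutionFunctor n).mono_ι
      (fun k => have := X.mono_resolutionFunctor_map k.le_succ
        Functor.map_mono (HomologicalComplex.eval A _ n) _)
      (isColimitOfPreserves (HomologicalComplex.eval A _ n) (colimit.isColimit _)) k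

lemma isZero_resolutionFunctor_obj_toNat {p : ℤ} (hp : p ≤ X.lowerBound) :
    IsZero (X.resolutionFunctor.obj (p - X.lowerBound).toNat) := by
  rw [show (p - X.lowerBound).toNat = 0 by omega]
  exact HomologicalComplex.isZero_of_isZero_X _ fun n => (X.level n).isZero_P

/-- For `p < p₀`, `(p - p₀).toNat` truncates to the zero stage `0`. -/
noncomputable def filteredResolution : FilteredComplex A where
  X := colimit X.resolutionFunctor
  W p := X.resolutionFunctor.obj (p - X.lowerBound).toNat
  ι p := X.resolutionFunctor.map (homOfLE (by omega))
  mono_ι p := X.mono_resolutionFunctor_map _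
  toX p := colimit.ι X.resolutionFunctor _
  mono_toX p := X.mono_colimit_ι _
  compat p := colimit.w _ _
  bounded_below := ⟨X.lowerBound, fun p hp n =>
    (HomologicalComplex.eval A _ n).map_isZero (X.isZero_resolutionFunctor_obj_toNat hp)⟩
  biregular n := ⟨X.lowerBound + X.stableStage n, X.isIso_colimit_ι_f (by omega)⟩

noncomputable def augmentationCocone : Cocone X.resolutionFunctor where
  pt := X.X
  ι := NatTrans.ofSequence (fun k => X.augment k ≫ X.toX (X.lowerBound + k)) fun k => by
    rw [reassoc_of% X.resolutionFunctor_map_augment, stageMap_toX]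
    exact (Category.comp_id _).symm

noncomputable def augmentationLift (p : ℤ) :
    X.resolutionFunctor.obj (p - X.lowerBound).toNat ⟶ X.W p :=
  if h : X.lowerBound ≤ p then X.augment _ ≫ eqToHom (congrArg X.W (by omega)) else 0

lemma augment_eqToHom_ι {k k' : ℕ} {p : ℤ} (hp : X.lowerBound + k = p) (hk : k + 1 = k') :
    (X.augment k ≫ eqToHom (congrArg X.W hp)) ≫ X.ι p =
      X.resolutionFunctor.map (homOfLE (by omega : k ≤ k')) ≫ X.augment k' ≫
        eqToHom (congrArg X.W (by omega : X.lowerBound + k' = p + 1)) := by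
  subst hp hk
  rw [reassoc_of% X.resolutionFunctor_map_augment, stageMap]
  simp

lemma augment_eqToHom_toX {k : ℕ} {p : ℤ} (hp : X.lowerBound + k = p) :
    (X.augment k ≫ eqToHom (congrArg X.W hp)) ≫ X.toX p =
      X.augment k ≫ X.toX (X.lowerBound + k) := by
  subst hp
  simp

noncomputable def filteredAugmentation : FilteredHom X.filteredResolution X where
  f := colimit.desc _ X.augmentationCocone
  lift := X.augmentationLift
  comm_toX p := by
    change _ = colimit.ι X.resolutionFunctor _ ≫ colimit.desc _ X.augmentationCocone
    rw [colimit.ι_desc]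
    by_cases h : X.lowerBound ≤ p
    · rw [augmentationLift, dif_pos h]
      exact X.augment_eqToHom_toX (by omega)
    · exact (X.isZero_resolutionFunctor_obj_toNat (by omega)).eq_of_src _ _
  comm_ι p := by
    by_cases h : X.lowerBound ≤ p
    · rw [augmentationLift, dif_pos h, augmentationLift, dif_pos (by omega)]
      exact X.augment_eqToHom_ι (by omega) (by omega)
    · exact (X.isZero_resolutionFunctor_obj_toNat (by omega)).eq_of_src _ _

lemma isFilteredQuasiIso_filteredAugmentation :
    X.filteredAugmentation.IsFilteredQuasiIso := fun p => by
  change QuasiIso (X.augmentationLift p)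
  by_cases h : X.lowerBound ≤ p
  · rw [augmentationLift, dif_pos h]
    infer_instance
  · have : IsIso (X.augmentationLift p) :=
      IsZero.isIso (X.isZero_resolutionFunctor_obj_toNat (by omega))
        (HomologicalComplex.isZero_of_isZero_X _ fun n => X.isZero_W_X_of_le (by omega) n) _
    infer_instance

lemma projective_cokernel_resolutionFunctor_map_f {a b : ℕ} (h : a + 1 = b) (n : ℕ) :
    Projective (cokernel ((X.resolutionFunctor.map (homOfLE (by omega : a ≤ b))).f n)) := by
  subst h
  rw [resolutionFunctor_map_succ]
  exact (X.level n).projective_cokernel_j a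

lemma projective_gr_filteredResolution (p : ℤ) (n : ℕ) :
    Projective (X.filteredResolution.gr p n) := by
  by_cases h : X.lowerBound ≤ p - 1
  · exact X.projective_cokernel_resolutionFunctor_map_f (by omega) n
  · have hz : IsZero ((X.filteredResolution.W (p - 1 + 1)).X n) :=
      (HomologicalComplex.eval A _ n).map_isZero (X.isZero_resolutionFunctor_obj_toNat (by omega))
    have := hz.epi ((X.filteredResolution.ι (p - 1)).f n)
    exact (isZero_cokernel_of_epi ((X.filteredResolution.ι (p - 1)).f n)).projective

end FilteredComplex

/-- If `A` is an abelian category with enough projectives, then every filtered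
bounded-below chain complex `(X, W)` admits a filtered quasi-isomorphism `ε : P ⟶ X`
where `P` is a filtered complex all of whose graded pieces `Gr^W_p P` are projective in
every degree. -/
theorem filtered_projective_models [EnoughProjectives A]
    (X : FilteredComplex A) :
    ∃ (P : FilteredComplex A) (ε : FilteredHom P X),
      ε.IsFilteredQuasiIso ∧ ∀ (p : ℤ) (n : ℕ), Projective (P.gr p n) :=
  ⟨X.filteredResolution, X.filteredAugmentation, X.isFilteredQuasiIso_filteredAugmentation,
    X.projective_gr_filteredResolution⟩
end
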